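/- arXiv:2508.06320 — 2 statements merged into one kernel-verified Lean document; each statement's English description precedes it below -/
import Mathlib

section
/- For every T∈ℕ with T ≥ 2, there exists an instance of the charging game with T time steps (namely: H is a single vertex a hosting one battery agent of capacity 1, with demands d(a_t)=+1 for odd t and d(a_t)=−1 for even t) such that the maximum welfare over all strategy profiles equals ⌊T/2⌋, while for every strictly ascending price profile (p_1 < p_2 < … < p_T), every Nash equilibrium has welfare exactly 1; hence the price of stability for ascending prices is at least ⌊T/2⌋. -/
/-!
Formalization of the charging game on capacitated energy networks.

An instance consists of a finite directed host graph `H = (V, E)`, `T` time steps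
(with per-time-step edge capacities `κE` and demands `d`), and a finite set `B` of
battery agents, each located at a node `loc b`, with battery edges `(b_t, b_{t+1})`
of capacity `κB b t`.
-/

structure ChargingGame where
  /-- households/vertices of the host graph -/
  V : Type
  fintypeV : Fintype V
  decV : DecidableEq V
  /-- number of time steps (time steps are indexed by `Fin T`) -/
  T : ℕ
  T_pos : 0 < T
  /-- directed edges (power lines) of the host graph -/
  E : Finset (V × V)
  /-- capacity of (the copy of) edge `e` in time step `t` -/
  κE : Fin T → V × V → ℝ
  κE_nonneg : ∀ t e, 0 ≤ κE t e
  /-- demand/supply of node `v` in time step `t` (positive = supply, negative = demand) -/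
  d : Fin T → V → ℝ
  /-- the battery agents -/
  B : Type
  fintypeB : Fintype B
  decB : DecidableEq B
  /-- the location of agent `b` -/
  loc : B → V
  /-- capacity of the battery edge `(b_t, b_{t+1})` (only `t` with `t+1 < T` is relevant) -/
  κB : B → Fin T → ℝ
  κB_nonneg : ∀ b t, 0 ≤ κB b t

attribute [instance] ChargingGame.fintypeV ChargingGame.decV
attribute [instance] ChargingGame.fintypeB ChargingGame.decB

namespace ChargingGame

variable (G : ChargingGame)

/-- Nodes of the time-expanded energy network graph `G`:
grid nodes `(t, v)`, battery nodes `(t, b)`, and `false` = source `x`, `true` = sink `y`. -/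
abbrev Node : Type := (Fin G.T × G.V) ⊕ ((Fin G.T × G.B) ⊕ Bool)

/-- the source `x` -/
abbrev source : G.Node := Sum.inr (Sum.inr false)

/-- the sink `y` -/
abbrev sink : G.Node := Sum.inr (Sum.inr true)

/-- the copy of household node `v` in time step `t` -/
abbrev gridNode (t : Fin G.T) (v : G.V) : G.Node := Sum.inl (t, v)

/-- the battery node `b_t` of agent `b` in time step `t` -/
abbrev batNode (t : Fin G.T) (b : G.B) : G.Node := Sum.inr (Sum.inl (t, b))

/-- The capacities of the graph `G_s` induced by a strategy profile
`s : B → Fin T → ℝ` (`s b t > 0` means agent `b` charges `s b t` in step `t`,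
`s b t < 0` means she discharges `-(s b t)`).  Non-edges have capacity `0`. -/
def cap (s : G.B → Fin G.T → ℝ) : G.Node → G.Node → ℝ
  | Sum.inl (t, v), Sum.inl (t', v') =>
      if t = t' ∧ (v, v') ∈ G.E then G.κE t (v, v') else 0
  | Sum.inl (t, v), Sum.inr (Sum.inl (t', b)) =>
      if t = t' ∧ G.loc b = v then max 0 (s b t') else 0
  | Sum.inr (Sum.inl (t, b)), Sum.inl (t', v) =>
      if t = t' ∧ G.loc b = v then max 0 (-(s b t)) else 0
  | Sum.inr (Sum.inl (t, b)), Sum.inr (Sum.inl (t', b')) =>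
      if b = b' ∧ (t' : ℕ) = (t : ℕ) + 1 then G.κB b t else 0
  | Sum.inr (Sum.inr false), Sum.inl (t, v) => max 0 (G.d t v)
  | Sum.inl (t, v), Sum.inr (Sum.inr true) => max 0 (-(G.d t v))
  | _, _ => 0

/-- A feasible flow on the node set of `G` with capacities `c`. -/
structure IsFlow (c : G.Node → G.Node → ℝ) (f : G.Node → G.Node → ℝ) : Prop where
  nonneg : ∀ u v, 0 ≤ f u v
  le_cap : ∀ u v, f u v ≤ c u v
  conserve : ∀ n, n ≠ G.source → n ≠ G.sink → (∑ u, f u n) = (∑ w, f n w)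

/-- The value `|f|` of a flow: total flow leaving the source. -/
def value (f : G.Node → G.Node → ℝ) : ℝ := ∑ v, f G.source v

/-- `f` is a maximum flow for capacities `c`. -/
def IsMaxFlow (c : G.Node → G.Node → ℝ) (f : G.Node → G.Node → ℝ) : Prop :=
  G.IsFlow c f ∧ ∀ g, G.IsFlow c g → G.value g ≤ G.value f

/-- Agent `b`'s strategy is admissible for the profile `s`:
every maximum flow in `G_s` saturates both transaction edges of `b` in every time step. -/
def Admissible (s : G.B → Fin G.T → ℝ) (b : G.B) : Prop :=
  ∀ f, G.IsMaxFlow (G.cap s) f → ∀ t : Fin G.T,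
    f (G.gridNode t (G.loc b)) (G.batNode t b)
        = G.cap s (G.gridNode t (G.loc b)) (G.batNode t b) ∧
    f (G.batNode t b) (G.gridNode t (G.loc b))
        = G.cap s (G.batNode t b) (G.gridNode t (G.loc b))

/-- A valid strategy of agent `b`: all prefix sums lie between `0` and the battery
capacity (for every `t` with `t + 1 < T`, i.e. `t ∈ [T-1]` in 1-based indexing). -/
def ValidStrategy (b : G.B) (sb : Fin G.T → ℝ) : Prop :=
  ∀ t : Fin G.T, (t : ℕ) + 1 < G.T →
    0 ≤ (∑ z ∈ Finset.Iic t, sb z) ∧ (∑ z ∈ Finset.Iic t, sb z) ≤ G.κB b t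

/-- A valid strategy profile. -/
def ValidProfile (s : G.B → Fin G.T → ℝ) : Prop := ∀ b, G.ValidStrategy b (s b)

open scoped Classical in
/-- The utility of agent `b` under price profile `p` and strategy profile `s`:
`-∑ t, s b t * p t` if `b`'s strategy is admissible, and `-∞` otherwise. -/
noncomputable def utility (p : Fin G.T → ℝ) (s : G.B → Fin G.T → ℝ) (b : G.B) : EReal :=
  if G.Admissible s b then ((-(∑ t, s b t * p t) : ℝ) : EReal) else ⊥

/-- `s` is a (pure) Nash equilibrium for the price profile `p`. -/
def IsNash (p : Fin G.T → ℝ) (s : G.B → Fin G.T → ℝ) : Prop :=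
  G.ValidProfile s ∧
  ∀ b (sb' : Fin G.T → ℝ), G.ValidStrategy b sb' →
    ¬ G.utility p s b < G.utility p (Function.update s b sb') b

/-- `s` is a `k`-strong equilibrium for the price profile `p`: no nonempty coalition of
at most `k` agents has a joint deviation strictly improving the utility of each member. -/
def IsStrongEq (k : ℕ) (p : Fin G.T → ℝ) (s : G.B → Fin G.T → ℝ) : Prop :=
  G.ValidProfile s ∧
  ∀ C : Finset G.B, C.Nonempty → C.card ≤ k →
    ∀ s' : G.B → Fin G.T → ℝ, (∀ b, G.ValidStrategy b (s' b)) →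
      (∀ b ∉ C, s' b = s b) →
      ¬ ∀ b ∈ C, G.utility p s b < G.utility p s' b

/-- The welfare `W(s)` of a strategy profile `s`: the value of a maximum flow in `G_s`. -/
noncomputable def welfare (s : G.B → Fin G.T → ℝ) : ℝ :=
  sSup {r | ∃ f, G.IsFlow (G.cap s) f ∧ G.value f = r}

/-- The maximum welfare over all (valid) strategy profiles. -/
noncomputable def optWelfare : ℝ :=
  sSup {r | ∃ s, G.ValidProfile s ∧ G.welfare s = r}

end ChargingGame

/-- The instance of STATEMENT 13 for `T` time steps: `H` is a single vertex `a` hosting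
one battery agent of capacity `1`, with demands `d(a_t) = +1` for odd `t` and
`d(a_t) = -1` for even `t` (in 1-based time indexing, i.e. `+1` for even indices of
`Fin T` and `-1` for odd ones). -/
noncomputable def game13 (T : ℕ) (hT : 0 < T) : ChargingGame where
  V := Unit
  fintypeV := inferInstance
  decV := inferInstance
  T := T
  T_pos := hT
  E := ∅
  κE := fun _ _ => 0
  κE_nonneg := fun _ _ => le_refl 0
  d := fun t _ => if t.val % 2 = 0 then 1 else -1
  B := Unit
  fintypeB := inferInstance
  decB := inferInstance
  loc := fun _ => ()
  κB := fun _ _ => 1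
  κB_nonneg := fun _ _ => zero_le_one


attribute [reducible] game13

namespace CG13

open Finset

variable {T : ℕ}

abbrev Nd (T : ℕ) := (Fin T × Unit) ⊕ ((Fin T × Unit) ⊕ Bool)

abbrev gr (t : Fin T) : Nd T := Sum.inl (t, ())
abbrev ba (t : Fin T) : Nd T := Sum.inr (Sum.inl (t, ()))
abbrev src (T : ℕ) : Nd T := Sum.inr (Sum.inr false)
abbrev snk (T : ℕ) : Nd T := Sum.inr (Sum.inr true)

lemma sum_node (g : Nd T → ℝ) :
    ∑ n, g n = (∑ t, g (gr t)) + (∑ t, g (ba t)) + g (src T) + g (snk T) := by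
  rw [Fintype.sum_sum_type, Fintype.sum_sum_type, Fintype.sum_prod_type,
    Fintype.sum_prod_type]
  simp [Fintype.sum_bool]
  ring

variable (hT : 0 < T)

lemma cap_src_gr (s : Unit → Fin T → ℝ) (t : Fin T) :
    (game13 T hT).cap s (src T) (gr t) = if t.val % 2 = 0 then 1 else 0 := by
  show max 0 (if t.val % 2 = 0 then (1:ℝ) else -1) = _
  split_ifs <;> norm_num

lemma cap_gr_snk (s : Unit → Fin T → ℝ) (t : Fin T) :
    (game13 T hT).cap s (gr t) (snk T) = if t.val % 2 = 0 then 0 else 1 := by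
  show max 0 (-(if t.val % 2 = 0 then (1:ℝ) else -1)) = _
  split_ifs <;> norm_num

lemma cap_gr_ba (s : Unit → Fin T → ℝ) (t t' : Fin T) :
    (game13 T hT).cap s (gr t) (ba t') = if t = t' then max 0 (s () t') else 0 := by
  show (if t = t' ∧ () = () then max 0 (s () t') else 0) = _
  simp

lemma cap_ba_gr (s : Unit → Fin T → ℝ) (t t' : Fin T) :
    (game13 T hT).cap s (ba t) (gr t') = if t = t' then max 0 (-(s () t)) else 0 := by
  show (if t = t' ∧ () = () then max 0 (-(s () t)) else 0) = _
  simp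

lemma cap_ba_ba (s : Unit → Fin T → ℝ) (t t' : Fin T) :
    (game13 T hT).cap s (ba t) (ba t') = if (t' : ℕ) = (t : ℕ) + 1 then 1 else 0 := by
  show (if () = () ∧ (t' : ℕ) = (t : ℕ) + 1 then (1:ℝ) else 0) = _
  simp

lemma cap_gr_gr (s : Unit → Fin T → ℝ) (t t' : Fin T) :
    (game13 T hT).cap s (gr t) (gr t') = 0 := by
  show (if t = t' ∧ ((), ()) ∈ (∅ : Finset (Unit × Unit)) then (0:ℝ) else 0) = 0
  simp

lemma cap_into_src (s : Unit → Fin T → ℝ) (n : Nd T) :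
    (game13 T hT).cap s n (src T) = 0 := by
  rcases n with ⟨t, ⟨⟩⟩ | ⟨⟨t, ⟨⟩⟩ | b⟩ <;> try rfl
  cases b <;> rfl

lemma cap_from_snk (s : Unit → Fin T → ℝ) (n : Nd T) :
    (game13 T hT).cap s (snk T) n = 0 := rfl

lemma cap_ba_snk (s : Unit → Fin T → ℝ) (t : Fin T) :
    (game13 T hT).cap s (ba t) (snk T) = 0 := rfl

lemma cap_src_ba (s : Unit → Fin T → ℝ) (t : Fin T) :
    (game13 T hT).cap s (src T) (ba t) = 0 := rfl

lemma cap_src_snk (s : Unit → Fin T → ℝ) :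
    (game13 T hT).cap s (src T) (snk T) = 0 := rfl

lemma cap_gr_src (s : Unit → Fin T → ℝ) (t : Fin T) :
    (game13 T hT).cap s (gr t) (src T) = 0 := rfl

lemma cap_nonneg (s : Unit → Fin T → ℝ) (u v : Nd T) :
    0 ≤ (game13 T hT).cap s u v := by
  rcases u with ⟨t, ⟨⟩⟩ | ⟨⟨t, ⟨⟩⟩ | (_ | _)⟩ <;>
    rcases v with ⟨t', ⟨⟩⟩ | ⟨⟨t', ⟨⟩⟩ | (_ | _)⟩
  · rw [cap_gr_gr]
  · rw [cap_gr_ba]; split_ifs <;> simp [le_max_left]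
  · rw [cap_gr_src]
  · rw [cap_gr_snk]; split_ifs <;> norm_num
  · rw [cap_ba_gr]; split_ifs <;> simp [le_max_left]
  · rw [cap_ba_ba]; split_ifs <;> norm_num
  · rw [cap_into_src]
  · rw [cap_ba_snk]
  · rw [cap_src_gr]; split_ifs <;> norm_num
  · rw [cap_src_ba]
  · rw [cap_into_src]
  · rw [cap_src_snk]
  · rw [cap_from_snk]
  · rw [cap_from_snk]
  · rw [cap_from_snk]
  · rw [cap_from_snk]

def extN (s : Fin T → ℝ) (i : ℕ) : ℝ := if h : i < T then s ⟨i, h⟩ else 0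

def pre (s : Fin T → ℝ) (i : ℕ) : ℝ := ∑ z ∈ Finset.range i, extN s z

lemma pre_succ (s : Fin T → ℝ) (i : ℕ) : pre s (i + 1) = pre s i + extN s i :=
  Finset.sum_range_succ _ _

lemma ext_lt (s : Fin T → ℝ) {i : ℕ} (h : i < T) : extN s i = s ⟨i, h⟩ := dif_pos h

lemma ext_ge (s : Fin T → ℝ) {i : ℕ} (h : T ≤ i) : extN s i = 0 := dif_neg (by omega)

lemma Iic_eq_pre (s : Fin T → ℝ) (t : Fin T) :
    ∑ z ∈ Finset.Iic t, s z = pre s (t.val + 1) := by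
  unfold pre
  rw [show (Finset.Iic t) = Finset.univ.filter (fun z : Fin T => z.val < t.val + 1) by
        ext z
        simp only [Finset.mem_Iic, Finset.mem_filter, Finset.mem_univ, true_and,
          Fin.le_def, Nat.lt_succ_iff]]
  rw [Finset.sum_filter]
  calc ∑ z : Fin T, (if (z : ℕ) < t.val + 1 then s z else 0)
      = ∑ z : Fin T, (if (z : ℕ) < t.val + 1 then extN s (z : ℕ) else 0) := by
        apply Finset.sum_congr rfl; intro z _
        rw [ext_lt s z.isLt, Fin.eta]
    _ = ∑ i ∈ Finset.range T, (if i < t.val + 1 then extN s i else 0) :=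
        Fin.sum_univ_eq_sum_range (fun i => if i < t.val + 1 then extN s i else 0) T
    _ = ∑ i ∈ Finset.range (t.val + 1), (if i < t.val + 1 then extN s i else 0) :=
        (Finset.sum_subset (Finset.range_subset_range.2 t.isLt)
          (fun i _ hi => if_neg (by simpa using hi))).symm
    _ = ∑ i ∈ Finset.range (t.val + 1), extN s i :=
        Finset.sum_congr rfl (fun i hi => if_pos (Finset.mem_range.1 hi))

lemma sum_indicator_odd (n : ℕ) :
    ∑ i ∈ Finset.range n, (if i % 2 = 0 then (0:ℝ) else 1) = ((n / 2 : ℕ) : ℝ) := by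
  induction n with
  | zero => simp
  | succ n ih =>
    rw [Finset.sum_range_succ, ih]
    by_cases h : n % 2 = 0
    · rw [if_pos h, add_zero]; congr 1; omega
    · rw [if_neg h, show (n+1)/2 = n/2 + 1 by omega]; push_cast; ring

section Flows

variable {s : Unit → Fin T → ℝ} {f : Nd T → Nd T → ℝ}

lemma flow_zero (hf : (game13 T hT).IsFlow ((game13 T hT).cap s) f)
    {u v : Nd T} (h : (game13 T hT).cap s u v = 0) : f u v = 0 :=
  le_antisymm (h ▸ hf.le_cap u v) (hf.nonneg u v)

lemma value_eq_sum_src (hf : (game13 T hT).IsFlow ((game13 T hT).cap s) f) :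
    (game13 T hT).value f = ∑ t, f (src T) (gr t) := by
  show (∑ v : Nd T, f (src T) v) = _
  rw [sum_node (fun v => f (src T) v)]
  rw [Finset.sum_eq_zero (fun t _ => flow_zero hT hf (cap_src_ba hT s t)),
    flow_zero hT hf (cap_into_src hT s _), flow_zero hT hf (cap_src_snk hT s)]
  ring

lemma grid_conserve (hf : (game13 T hT).IsFlow ((game13 T hT).cap s) f) (t : Fin T) :
    f (src T) (gr t) + f (ba t) (gr t) = f (gr t) (ba t) + f (gr t) (snk T) := by
  have h : (∑ u : Nd T, f u (gr t)) = ∑ w : Nd T, f (gr t) w :=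
    hf.conserve (gr t) (by simp [ChargingGame.source]) (by simp [ChargingGame.sink])
  rw [sum_node (fun u => f u (gr t)), sum_node (fun w => f (gr t) w)] at h
  rw [Finset.sum_eq_zero (fun t' _ => flow_zero hT hf (cap_gr_gr hT s t' t)),
    Finset.sum_eq_single t (fun t' _ hne => flow_zero hT hf
      (by rw [cap_ba_gr]; exact if_neg hne)) (by simp),
    flow_zero hT hf (cap_from_snk hT s _)] at h
  rw [Finset.sum_eq_zero (fun t' _ => flow_zero hT hf (cap_gr_gr hT s t t')),
    Finset.sum_eq_single t (fun t' _ hne => flow_zero hT hf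
      (by rw [cap_gr_ba]; exact if_neg (fun hh => hne hh.symm))) (by simp),
    flow_zero hT hf (cap_gr_src hT s t)] at h
  linarith

lemma bat_conserve (hf : (game13 T hT).IsFlow ((game13 T hT).cap s) f) (t : Fin T) :
    (∑ t', f (ba t') (ba t)) + f (gr t) (ba t)
      = (∑ t', f (ba t) (ba t')) + f (ba t) (gr t) := by
  have h : (∑ u : Nd T, f u (ba t)) = ∑ w : Nd T, f (ba t) w :=
    hf.conserve (ba t) (by simp [ChargingGame.source]) (by simp [ChargingGame.sink])
  rw [sum_node (fun u => f u (ba t)), sum_node (fun w => f (ba t) w)] at h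
  have h1 : (∑ t', f (gr t') (ba t)) = f (gr t) (ba t) :=
    Finset.sum_eq_single t (fun t' _ hne => flow_zero hT hf
      (by rw [cap_gr_ba]; exact if_neg hne)) (by simp)
  have h2 : (∑ t', f (ba t) (gr t')) = f (ba t) (gr t) :=
    Finset.sum_eq_single t (fun t' _ hne => flow_zero hT hf
      (by rw [cap_ba_gr]; exact if_neg (fun hh => hne hh.symm))) (by simp)
  have h3 : f (src T) (ba t) = 0 := flow_zero hT hf (cap_src_ba hT s t)
  have h4 : f (snk T) (ba t) = 0 := flow_zero hT hf (cap_from_snk hT s _)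
  have h5 : f (ba t) (src T) = 0 := flow_zero hT hf (cap_into_src hT s _)
  have h6 : f (ba t) (snk T) = 0 := flow_zero hT hf (cap_ba_snk hT s t)
  rw [h1, h2, h3, h4, h5, h6] at h
  linarith

lemma value_eq_sum_snk (hf : (game13 T hT).IsFlow ((game13 T hT).cap s) f) :
    (game13 T hT).value f = ∑ t, f (gr t) (snk T) := by
  have h : (∑ n : Nd T, ∑ u : Nd T, f u n) = ∑ u : Nd T, ∑ n : Nd T, f u n :=
    Finset.sum_comm
  rw [sum_node (fun n => ∑ u : Nd T, f u n), sum_node (fun u => ∑ n : Nd T, f u n)] at h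
  have hgr : (∑ t, ∑ u : Nd T, f u (gr t)) = ∑ t, ∑ n : Nd T, f (gr t) n :=
    Finset.sum_congr rfl (fun t _ =>
      hf.conserve (gr t) (by simp [ChargingGame.source]) (by simp [ChargingGame.sink]))
  have hba : (∑ t, ∑ u : Nd T, f u (ba t)) = ∑ t, ∑ n : Nd T, f (ba t) n :=
    Finset.sum_congr rfl (fun t _ =>
      hf.conserve (ba t) (by simp [ChargingGame.source]) (by simp [ChargingGame.sink]))
  have hsrc0 : (∑ u : Nd T, f u (src T)) = 0 :=
    Finset.sum_eq_zero (fun u _ => flow_zero hT hf (cap_into_src hT s u))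
  have hsnk0 : (∑ n : Nd T, f (snk T) n) = 0 :=
    Finset.sum_eq_zero (fun u _ => flow_zero hT hf (cap_from_snk hT s u))
  have hval : (game13 T hT).value f = ∑ n : Nd T, f (src T) n := rfl
  have hsnkin : (∑ u : Nd T, f u (snk T)) = ∑ t, f (gr t) (snk T) := by
    rw [sum_node (fun u => f u (snk T))]
    rw [Finset.sum_eq_zero (fun t _ => flow_zero hT hf (cap_ba_snk hT s t)),
      flow_zero hT hf (cap_src_snk hT s),
      flow_zero hT hf (cap_from_snk hT s _)]
    ring
  rw [hval]
  linarith

lemma value_le_half (hf : (game13 T hT).IsFlow ((game13 T hT).cap s) f) :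
    (game13 T hT).value f ≤ ((T / 2 : ℕ) : ℝ) := by
  rw [value_eq_sum_snk hT hf]
  calc (∑ t, f (gr t) (snk T))
      ≤ ∑ t : Fin T, (if (t : ℕ) % 2 = 0 then (0:ℝ) else 1) :=
        Finset.sum_le_sum (fun t _ => (cap_gr_snk hT s t) ▸ hf.le_cap (gr t) (snk T))
    _ = ∑ i ∈ Finset.range T, (if i % 2 = 0 then (0:ℝ) else 1) :=
        Fin.sum_univ_eq_sum_range (fun i => if i % 2 = 0 then (0:ℝ) else 1) T
    _ = ((T / 2 : ℕ) : ℝ) := sum_indicator_odd T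

end Flows


/-- The "good strategy" predicate: correct signs, prefix sums in `[0,1]`, total zero. -/
def GoodN (T : ℕ) (s : Fin T → ℝ) : Prop :=
  (∀ i : Fin T, if (i : ℕ) % 2 = 0 then 0 ≤ s i ∧ s i ≤ 1 else -1 ≤ s i ∧ s i ≤ 0) ∧
  (∀ i : ℕ, 0 ≤ pre s i ∧ pre s i ≤ 1) ∧ pre s T = 0

/-- The canonical flow induced by a strategy. -/
def Phi (s : Fin T → ℝ) : Nd T → Nd T → ℝ
  | Sum.inr (Sum.inr false), Sum.inl (t, _) => max 0 (s t)
  | Sum.inl (t, _), Sum.inr (Sum.inl (t', _)) => if t = t' then max 0 (s t) else 0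
  | Sum.inr (Sum.inl (t, _)), Sum.inl (t', _) => if t = t' then max 0 (-(s t)) else 0
  | Sum.inr (Sum.inl (t, _)), Sum.inr (Sum.inl (t', _)) =>
      if (t' : ℕ) = (t : ℕ) + 1 then pre s ((t : ℕ) + 1) else 0
  | Sum.inl (t, _), Sum.inr (Sum.inr true) => max 0 (-(s t))
  | _, _ => 0

section PhiLemmas

variable (s : Fin T → ℝ)

lemma Phi_src_gr (t : Fin T) : Phi s (src T) (gr t) = max 0 (s t) := rfl
lemma Phi_gr_ba (t t' : Fin T) :
    Phi s (gr t) (ba t') = if t = t' then max 0 (s t) else 0 := rfl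
lemma Phi_ba_gr (t t' : Fin T) :
    Phi s (ba t) (gr t') = if t = t' then max 0 (-(s t)) else 0 := rfl
lemma Phi_ba_ba (t t' : Fin T) :
    Phi s (ba t) (ba t') = if (t' : ℕ) = (t : ℕ) + 1 then pre s ((t : ℕ) + 1) else 0 := rfl
lemma Phi_gr_snk (t : Fin T) : Phi s (gr t) (snk T) = max 0 (-(s t)) := rfl
lemma Phi_gr_gr (t t' : Fin T) : Phi s (gr t) (gr t') = 0 := rfl
lemma Phi_gr_src (t : Fin T) : Phi s (gr t) (src T) = 0 := rfl
lemma Phi_src_ba (t : Fin T) : Phi s (src T) (ba t) = 0 := rfl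
lemma Phi_ba_src (t : Fin T) : Phi s (ba t) (src T) = 0 := rfl
lemma Phi_ba_snk (t : Fin T) : Phi s (ba t) (snk T) = 0 := rfl
lemma Phi_snk (n : Nd T) : Phi s (snk T) n = 0 := rfl
lemma Phi_src_src : Phi s (src T) (src T) = 0 := rfl
lemma Phi_src_snk : Phi s (src T) (snk T) = 0 := rfl
lemma Phi_into_src (n : Nd T) : Phi s n (src T) = 0 := by
  rcases n with ⟨t, ⟨⟩⟩ | ⟨⟨t, ⟨⟩⟩ | (_ | _)⟩ <;> rfl
lemma Phi_snk_gen (n : Nd T) : Phi s (snk T) n = 0 := rfl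

lemma Phi_chain_in (t : Fin T) : (∑ t', Phi s (ba t') (ba t)) = pre s (t : ℕ) := by
  rcases Nat.eq_zero_or_pos (t : ℕ) with h0 | hpos
  · rw [h0]
    apply Finset.sum_eq_zero
    intro t' _
    rw [Phi_ba_ba, if_neg (by omega)]
  · have hlt : (t : ℕ) - 1 < T := by have := t.isLt; omega
    rw [Finset.sum_eq_single (⟨(t : ℕ) - 1, hlt⟩ : Fin T)
      (fun t' _ hne => by
        rw [Phi_ba_ba, if_neg (fun hc => hne (Fin.ext (by simp at hc ⊢; omega)))])
      (by simp), Phi_ba_ba, if_pos (by simp; omega)]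
    congr 1
    simp
    omega

lemma Phi_chain_out (hpT : pre s T = 0) (t : Fin T) :
    (∑ t', Phi s (ba t) (ba t')) = pre s ((t : ℕ) + 1) := by
  by_cases h : (t : ℕ) + 1 < T
  · rw [Finset.sum_eq_single (⟨(t : ℕ) + 1, h⟩ : Fin T)
      (fun t' _ hne => by
        rw [Phi_ba_ba, if_neg (fun hc => hne (Fin.ext (by simpa using hc)))])
      (by simp), Phi_ba_ba, if_pos (by simp)]
  · have hTeq : (t : ℕ) + 1 = T := by have := t.isLt; omega
    rw [hTeq, hpT]
    apply Finset.sum_eq_zero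
    intro t' _
    rw [Phi_ba_ba, if_neg (by have := t'.isLt; omega)]

lemma Phi_gr_ba_sum (t : Fin T) : (∑ t', Phi s (gr t) (ba t')) = max 0 (s t) := by
  rw [Finset.sum_eq_single t (fun t' _ hne => by
      rw [Phi_gr_ba, if_neg (fun hc => hne hc.symm)]) (by simp), Phi_gr_ba, if_pos rfl]

lemma Phi_gr_ba_sum' (t : Fin T) : (∑ t', Phi s (gr t') (ba t)) = max 0 (s t) := by
  rw [Finset.sum_eq_single t (fun t' _ hne => by
      rw [Phi_gr_ba, if_neg hne]) (by simp), Phi_gr_ba, if_pos rfl]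

lemma Phi_ba_gr_sum (t : Fin T) : (∑ t', Phi s (ba t) (gr t')) = max 0 (-(s t)) := by
  rw [Finset.sum_eq_single t (fun t' _ hne => by
      rw [Phi_ba_gr, if_neg (fun hc => hne hc.symm)]) (by simp), Phi_ba_gr, if_pos rfl]

lemma Phi_ba_gr_sum' (t : Fin T) : (∑ t', Phi s (ba t') (gr t)) = max 0 (-(s t)) := by
  rw [Finset.sum_eq_single t (fun t' _ hne => by
      rw [Phi_ba_gr, if_neg hne]) (by simp), Phi_ba_gr, if_pos rfl]

end PhiLemmas

lemma max_sub_max (x : ℝ) : max 0 x - max 0 (-x) = x := by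
  rcases le_total 0 x with h | h
  · rw [max_eq_right h, max_eq_left (by linarith)]; ring
  · rw [max_eq_left h, max_eq_right (by linarith)]; ring

lemma Phi_isFlow (sp : Unit → Fin T → ℝ) (hs : GoodN T (sp ())) :
    (game13 T hT).IsFlow ((game13 T hT).cap sp) (Phi (sp ())) := by
  set s := sp () with hsdef
  obtain ⟨hsign, hpre, hpT⟩ := hs
  constructor
  · intro u v
    rcases u with ⟨t, ⟨⟩⟩ | ⟨⟨t, ⟨⟩⟩ | (_ | _)⟩ <;> rcases v with ⟨t', ⟨⟩⟩ | ⟨⟨t', ⟨⟩⟩ | (_ | _)⟩ <;>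
      first
        | exact le_refl 0
        | (rw [Phi_gr_ba]; split_ifs <;> simp [le_max_left])
        | (rw [Phi_ba_gr]; split_ifs <;> simp [le_max_left])
        | (rw [Phi_ba_ba]; split_ifs with h; exacts [(hpre _).1, le_refl 0])
        | (rw [Phi_src_gr]; exact le_max_left _ _)
        | (rw [Phi_gr_snk]; exact le_max_left _ _)
  · intro u v
    rcases u with ⟨t, ⟨⟩⟩ | ⟨⟨t, ⟨⟩⟩ | (_ | _)⟩ <;> rcases v with ⟨t', ⟨⟩⟩ | ⟨⟨t', ⟨⟩⟩ | (_ | _)⟩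
    · rw [Phi_gr_gr, cap_gr_gr]
    · rw [Phi_gr_ba, cap_gr_ba]
      split_ifs with h
      · subst h; exact le_refl _
      · exact le_refl 0
    · rw [Phi_gr_src, cap_gr_src]
    · rw [Phi_gr_snk, cap_gr_snk]
      have h2 := hsign t
      by_cases h : (t : ℕ) % 2 = 0
      · rw [if_pos h] at h2 ⊢; exact max_le le_rfl (by linarith [h2.1])
      · rw [if_neg h] at h2 ⊢; exact max_le zero_le_one (by linarith [h2.1])
    · rw [Phi_ba_gr, cap_ba_gr]
    · rw [Phi_ba_ba, cap_ba_ba]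
      split_ifs with h
      · exact (hpre _).2
      · exact le_refl 0
    · rw [Phi_ba_src, cap_into_src]
    · rw [Phi_ba_snk, cap_ba_snk]
    · rw [Phi_src_gr, cap_src_gr]
      have h2 := hsign t'
      by_cases h : (t' : ℕ) % 2 = 0
      · rw [if_pos h] at h2 ⊢; exact max_le zero_le_one h2.2
      · rw [if_neg h] at h2 ⊢; exact max_le le_rfl (by linarith [h2.2])
    · rw [Phi_src_ba, cap_src_ba]
    · rw [Phi_src_src, cap_into_src]
    · rw [Phi_src_snk, cap_src_snk]
    · rw [Phi_snk_gen]; exact cap_nonneg hT sp _ _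
    · rw [Phi_snk_gen]; exact cap_nonneg hT sp _ _
    · rw [Phi_snk_gen]; exact cap_nonneg hT sp _ _
    · rw [Phi_snk_gen]; exact cap_nonneg hT sp _ _
  · intro n hn1 hn2
    rcases n with ⟨t, ⟨⟩⟩ | ⟨⟨t, ⟨⟩⟩ | (_ | _)⟩
    · show (∑ u : Nd T, Phi s u (gr t)) = ∑ w : Nd T, Phi s (gr t) w
      rw [sum_node (fun u => Phi s u (gr t)), sum_node (fun w => Phi s (gr t) w)]
      rw [Finset.sum_eq_zero (fun t' _ => Phi_gr_gr s t' t), Phi_ba_gr_sum' s t,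
        Phi_src_gr, Phi_snk_gen,
        Finset.sum_eq_zero (fun t' _ => Phi_gr_gr s t t'), Phi_gr_ba_sum s t,
        Phi_gr_src, Phi_gr_snk]
      ring
    · show (∑ u : Nd T, Phi s u (ba t)) = ∑ w : Nd T, Phi s (ba t) w
      rw [sum_node (fun u => Phi s u (ba t)), sum_node (fun w => Phi s (ba t) w)]
      rw [Phi_gr_ba_sum' s t, Phi_chain_in s t, Phi_src_ba, Phi_snk_gen,
        Phi_ba_gr_sum s t, Phi_chain_out s hpT t, Phi_ba_src, Phi_ba_snk, pre_succ]
      have hext : extN s (t : ℕ) = s t := by rw [ext_lt s t.isLt, Fin.eta]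
      have := max_sub_max (s t)
      rw [hext]
      linarith
    · exact absurd rfl hn1
    · exact absurd rfl hn2

lemma Phi_value (sp : Unit → Fin T → ℝ) (hf : (game13 T hT).IsFlow ((game13 T hT).cap sp) (Phi (sp ()))) :
    (game13 T hT).value (Phi (sp ())) = ∑ t, max 0 (sp () t) := by
  rw [value_eq_sum_src hT hf]
  exact Finset.sum_congr rfl (fun t _ => Phi_src_gr _ t)

lemma welfare_eq (sp : Unit → Fin T → ℝ) (V : ℝ)
    (hex : ∃ f, (game13 T hT).IsFlow ((game13 T hT).cap sp) f ∧ (game13 T hT).value f = V)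
    (hub : ∀ g, (game13 T hT).IsFlow ((game13 T hT).cap sp) g → (game13 T hT).value g ≤ V) :
    (game13 T hT).welfare sp = V := by
  apply le_antisymm
  · apply csSup_le
    · obtain ⟨f, hf, hv⟩ := hex; exact ⟨V, f, hf, hv⟩
    · rintro r ⟨g, hg, rfl⟩; exact hub g hg
  · apply le_csSup
    · exact ⟨V, by rintro r ⟨g, hg, rfl⟩; exact hub g hg⟩
    · obtain ⟨f, hf, hv⟩ := hex; exact ⟨f, hf, hv⟩

lemma zero_isFlow (sp : Unit → Fin T → ℝ) :
    (game13 T hT).IsFlow ((game13 T hT).cap sp) (fun _ _ => 0) := by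
  refine ⟨fun _ _ => le_refl 0, fun u v => cap_nonneg hT sp u v, fun n _ _ => by simp⟩

lemma exists_maxflow (sp : Unit → Fin T → ℝ) :
    ∃ f, (game13 T hT).IsMaxFlow ((game13 T hT).cap sp) f := by
  classical
  set c := (game13 T hT).cap sp with hc
  set K : Set (Nd T → Nd T → ℝ) := {f | (game13 T hT).IsFlow c f} with hK
  have hne : K.Nonempty := ⟨fun _ _ => 0, zero_isFlow hT sp⟩
  have ceval : ∀ u v : Nd T, Continuous (fun f : Nd T → Nd T → ℝ => f u v) :=
    fun u v => (continuous_apply v).comp (continuous_apply u)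
  have hclosed : IsClosed K := by
    have : K = (⋂ u, ⋂ v, {f : Nd T → Nd T → ℝ | 0 ≤ f u v}) ∩
        ((⋂ u, ⋂ v, {f : Nd T → Nd T → ℝ | f u v ≤ c u v}) ∩
         (⋂ n, ⋂ (_ : n ≠ (game13 T hT).source), ⋂ (_ : n ≠ (game13 T hT).sink),
           {f : Nd T → Nd T → ℝ | (∑ u, f u n) = ∑ w, f n w})) := by
      ext f
      constructor
      · intro hf
        exact ⟨by simp only [Set.mem_iInter]; exact fun u v => hf.nonneg u v,
          by simp only [Set.mem_iInter]; exact fun u v => hf.le_cap u v,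
          by simp only [Set.mem_iInter]; exact fun n h1 h2 => hf.conserve n h1 h2⟩
      · rintro ⟨h1, h2, h3⟩
        simp only [Set.mem_iInter] at h1 h2 h3
        exact ⟨h1, h2, h3⟩
    rw [this]
    refine IsClosed.inter ?_ (IsClosed.inter ?_ ?_)
    · exact isClosed_iInter fun u => isClosed_iInter fun v =>
        isClosed_le continuous_const (ceval u v)
    · exact isClosed_iInter fun u => isClosed_iInter fun v =>
        isClosed_le (ceval u v) continuous_const
    · refine isClosed_iInter fun n => isClosed_iInter fun _ => isClosed_iInter fun _ => ?_
      exact isClosed_eq (continuous_finset_sum _ (fun u _ => ceval u n))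
        (continuous_finset_sum _ (fun w _ => ceval n w))
  have hcomp : IsCompact (Set.pi Set.univ (fun u : Nd T =>
      Set.pi Set.univ (fun v : Nd T => Set.Icc (0:ℝ) (c u v)))) :=
    isCompact_univ_pi (fun u => isCompact_univ_pi (fun v => isCompact_Icc))
  have hsub : K ⊆ Set.pi Set.univ (fun u : Nd T =>
      Set.pi Set.univ (fun v : Nd T => Set.Icc (0:ℝ) (c u v))) :=
    fun f hf u _ => fun v _ => ⟨hf.nonneg u v, hf.le_cap u v⟩
  have hKcomp : IsCompact K := hcomp.of_isClosed_subset hclosed hsub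
  have hcont : Continuous fun f : Nd T → Nd T → ℝ => (game13 T hT).value f :=
    continuous_finset_sum _ (fun v _ => ceval (game13 T hT).source v)
  obtain ⟨f, hfK, hfmax⟩ := hKcomp.exists_isMaxOn hne hcont.continuousOn
  exact ⟨f, hfK, fun g hg => hfmax hg⟩


section MaxFlow

variable {s : Unit → Fin T → ℝ} {f : Nd T → Nd T → ℝ}

lemma src_gr_le (hf : (game13 T hT).IsFlow ((game13 T hT).cap s) f) (t : Fin T) :
    f (src T) (gr t) ≤ max 0 (s () t) := by
  by_cases h : (t : ℕ) % 2 = 0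
  · have hc := grid_conserve hT hf t
    have h1 : f (gr t) (snk T) = 0 :=
      flow_zero hT hf (by rw [cap_gr_snk, if_pos h])
    have h2 : f (gr t) (ba t) ≤ max 0 (s () t) := by
      have := hf.le_cap (gr t) (ba t); rwa [cap_gr_ba, if_pos rfl] at this
    have h3 : 0 ≤ f (ba t) (gr t) := hf.nonneg _ _
    linarith
  · have h0 : f (src T) (gr t) = 0 :=
      flow_zero hT hf (by rw [cap_src_gr, if_neg h])
    rw [h0]; exact le_max_left _ _

lemma gr_snk_le (hf : (game13 T hT).IsFlow ((game13 T hT).cap s) f) (t : Fin T) :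
    f (gr t) (snk T) ≤ max 0 (-(s () t)) := by
  by_cases h : (t : ℕ) % 2 = 0
  · have h1 : f (gr t) (snk T) = 0 :=
      flow_zero hT hf (by rw [cap_gr_snk, if_pos h])
    rw [h1]; exact le_max_left _ _
  · have hc := grid_conserve hT hf t
    have h0 : f (src T) (gr t) = 0 :=
      flow_zero hT hf (by rw [cap_src_gr, if_neg h])
    have h2 : f (ba t) (gr t) ≤ max 0 (-(s () t)) := by
      have := hf.le_cap (ba t) (gr t); rwa [cap_ba_gr, if_pos rfl] at this
    have h3 : 0 ≤ f (gr t) (ba t) := hf.nonneg _ _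
    linarith

lemma value_le_charge (hf : (game13 T hT).IsFlow ((game13 T hT).cap s) f) :
    (game13 T hT).value f ≤ ∑ t, max 0 (s () t) := by
  rw [value_eq_sum_src hT hf]
  exact Finset.sum_le_sum (fun t _ => src_gr_le hT hf t)

lemma sum_univ_eq_pre (q : Fin T → ℝ) : (∑ t, q t) = pre q T := by
  rw [pre, ← Fin.sum_univ_eq_sum_range (extN q) T]
  exact Finset.sum_congr rfl (fun t _ => by rw [ext_lt q t.isLt, Fin.eta])

lemma sum_neg_eq_sum_pos {q : Fin T → ℝ} (h : pre q T = 0) :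
    (∑ t, max 0 (-(q t))) = ∑ t, max 0 (q t) := by
  have h1 : (∑ t, (max 0 (q t) - max 0 (-(q t)))) = ∑ t, q t :=
    Finset.sum_congr rfl (fun t _ => max_sub_max (q t))
  rw [Finset.sum_sub_distrib, sum_univ_eq_pre q, h] at h1
  linarith

/-- Every good strategy is admissible. -/
lemma admissible_of_good (sp : Unit → Fin T → ℝ) (hs : GoodN T (sp ())) :
    (game13 T hT).Admissible sp () := by
  intro f hmf t
  obtain ⟨hf, hmax⟩ := hmf
  have hPhi := Phi_isFlow hT sp hs
  have hVge : (∑ t, max 0 (sp () t)) ≤ (game13 T hT).value f :=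
    (Phi_value hT sp hPhi) ▸ hmax _ hPhi
  have hsrcsum : (∑ t : Fin T, f (src T) (gr t)) = ∑ t : Fin T, max 0 (sp () t) :=
    le_antisymm (Finset.sum_le_sum (fun t _ => src_gr_le hT hf t))
      (by rw [← value_eq_sum_src hT hf]; exact hVge)
  have hsrcsat : ∀ t : Fin T, f (src T) (gr t) = max 0 (sp () t) := fun t =>
    (Finset.sum_eq_sum_iff_of_le (fun t _ => src_gr_le hT hf t)).1 hsrcsum t
      (Finset.mem_univ t)
  have hsnksum : (∑ t : Fin T, f (gr t) (snk T)) = ∑ t : Fin T, max 0 (-(sp () t)) :=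
    le_antisymm (Finset.sum_le_sum (fun t _ => gr_snk_le hT hf t))
      (by
        rw [← value_eq_sum_snk hT hf, sum_neg_eq_sum_pos hs.2.2]
        exact hVge)
  have hsnksat : ∀ t : Fin T, f (gr t) (snk T) = max 0 (-(sp () t)) := fun t =>
    (Finset.sum_eq_sum_iff_of_le (fun t _ => gr_snk_le hT hf t)).1 hsnksum t
      (Finset.mem_univ t)
  have hc := grid_conserve hT hf t
  rw [hsrcsat t, hsnksat t] at hc
  have hba_le : f (ba t) (gr t) ≤ max 0 (-(sp () t)) := by
    have := hf.le_cap (ba t) (gr t); rwa [cap_ba_gr, if_pos rfl] at this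
  have hgb_le : f (gr t) (ba t) ≤ max 0 (sp () t) := by
    have := hf.le_cap (gr t) (ba t); rwa [cap_gr_ba, if_pos rfl] at this
  have hba_nn : 0 ≤ f (ba t) (gr t) := hf.nonneg _ _
  have hgb_nn : 0 ≤ f (gr t) (ba t) := hf.nonneg _ _
  have hsg := hs.1 t
  constructor
  · show f (gr t) (ba t) = (game13 T hT).cap sp (gr t) (ba t)
    rw [cap_gr_ba, if_pos rfl]
    by_cases h : (t : ℕ) % 2 = 0
    · rw [if_pos h] at hsg
      have hz : max 0 (-(sp () t)) = 0 := max_eq_left (by linarith [hsg.1])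
      rw [hz] at hc hba_le
      linarith
    · rw [if_neg h] at hsg
      have hz : max 0 (sp () t) = 0 := max_eq_left hsg.2
      rw [hz] at hc ⊢
      linarith
  · show f (ba t) (gr t) = (game13 T hT).cap sp (ba t) (gr t)
    rw [cap_ba_gr, if_pos rfl]
    by_cases h : (t : ℕ) % 2 = 0
    · rw [if_pos h] at hsg
      have hz : max 0 (-(sp () t)) = 0 := max_eq_left (by linarith [hsg.1])
      rw [hz] at hba_le ⊢
      linarith
    · rw [if_neg h] at hsg
      have hz : max 0 (sp () t) = 0 := max_eq_left hsg.2
      rw [hz] at hc hgb_le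
      linarith

lemma welfare_of_good (sp : Unit → Fin T → ℝ) (hs : GoodN T (sp ())) :
    (game13 T hT).welfare sp = ∑ t, max 0 (sp () t) :=
  welfare_eq hT sp _ ⟨Phi (sp ()), Phi_isFlow hT sp hs, Phi_value hT sp (Phi_isFlow hT sp hs)⟩
    (fun g hg => value_le_charge hT hg)

lemma chain_in_eval (hf : (game13 T hT).IsFlow ((game13 T hT).cap s) f) (t : Fin T) :
    (∑ t', f (ba t') (ba t))
      = if h : 0 < (t : ℕ) then f (ba ⟨(t : ℕ) - 1, by have := t.isLt; omega⟩) (ba t) else 0 := by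
  split_ifs with h
  · exact Finset.sum_eq_single _ (fun t' _ hne => flow_zero hT hf
      (by rw [cap_ba_ba]; exact if_neg (fun hc => hne (Fin.ext (by simp at hc ⊢; omega)))))
      (by simp)
  · exact Finset.sum_eq_zero (fun t' _ => flow_zero hT hf
      (by rw [cap_ba_ba]; exact if_neg (by omega)))

lemma chain_out_eval (hf : (game13 T hT).IsFlow ((game13 T hT).cap s) f) (t : Fin T) :
    (∑ t', f (ba t) (ba t'))
      = if h : (t : ℕ) + 1 < T then f (ba t) (ba ⟨(t : ℕ) + 1, h⟩) else 0 := by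
  split_ifs with h
  · exact Finset.sum_eq_single _ (fun t' _ hne => flow_zero hT hf
      (by rw [cap_ba_ba]; exact if_neg (fun hc => hne (Fin.ext (by simpa using hc)))))
      (by simp)
  · exact Finset.sum_eq_zero (fun t' _ => flow_zero hT hf
      (by rw [cap_ba_ba]; exact if_neg (by have := t'.isLt; omega)))

/-- An admissible strategy is good. -/
lemma good_of_admissible (sp : Unit → Fin T → ℝ)
    (hadm : (game13 T hT).Admissible sp ()) : GoodN T (sp ()) := by
  obtain ⟨f, hmf⟩ := exists_maxflow hT sp
  have hf := hmf.1
  have hsat : ∀ t : Fin T, f (gr t) (ba t) = max 0 (sp () t)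
      ∧ f (ba t) (gr t) = max 0 (-(sp () t)) := by
    intro t
    have h := hadm f hmf t
    have h1 : f (gr t) (ba t) = (game13 T hT).cap sp (gr t) (ba t) := h.1
    have h2 : f (ba t) (gr t) = (game13 T hT).cap sp (ba t) (gr t) := h.2
    rw [cap_gr_ba, if_pos rfl] at h1
    rw [cap_ba_gr, if_pos rfl] at h2
    exact ⟨h1, h2⟩
  -- sign conditions
  have hsign : ∀ i : Fin T, if (i : ℕ) % 2 = 0
      then 0 ≤ sp () i ∧ sp () i ≤ 1 else -1 ≤ sp () i ∧ sp () i ≤ 0 := by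
    intro t
    have hc := grid_conserve hT hf t
    rw [(hsat t).1, (hsat t).2] at hc
    have hmm := max_sub_max (sp () t)
    by_cases h : (t : ℕ) % 2 = 0
    · have h1 : f (gr t) (snk T) = 0 :=
        flow_zero hT hf (by rw [cap_gr_snk, if_pos h])
      have h2 : f (src T) (gr t) ≤ 1 := by
        have := hf.le_cap (src T) (gr t); rwa [cap_src_gr, if_pos h] at this
      have h3 : 0 ≤ f (src T) (gr t) := hf.nonneg _ _
      rw [if_pos h]
      constructor <;> linarith
    · have h1 : f (src T) (gr t) = 0 :=
        flow_zero hT hf (by rw [cap_src_gr, if_neg h])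
      have h2 : f (gr t) (snk T) ≤ 1 := by
        have := hf.le_cap (gr t) (snk T); rwa [cap_gr_snk, if_neg h] at this
      have h3 : 0 ≤ f (gr t) (snk T) := hf.nonneg _ _
      rw [if_neg h]
      constructor <;> linarith
  -- the chain flow equals the prefix sums
  have claim : ∀ i, ∀ hi : i < T,
      (if h : i + 1 < T then f (ba ⟨i, hi⟩) (ba ⟨i + 1, h⟩) else 0) = pre (sp ()) (i + 1) := by
    intro i
    induction i with
    | zero =>
      intro hi
      have hb := bat_conserve hT hf ⟨0, hi⟩
      rw [chain_in_eval hT hf, chain_out_eval hT hf, (hsat _).1, (hsat _).2] at hb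
      rw [dif_neg (by simp)] at hb
      have hmm := max_sub_max (sp () ⟨0, hi⟩)
      have hpre1 : pre (sp ()) 1 = sp () ⟨0, hi⟩ := by
        rw [pre, Finset.sum_range_one, ext_lt (sp ()) hi]
      rw [hpre1]
      simp only at hb ⊢
      linarith
    | succ n ih =>
      intro hi
      have hn : n < T := by omega
      have hprev := ih hn
      rw [dif_pos hi] at hprev
      have hb := bat_conserve hT hf ⟨n + 1, hi⟩
      rw [chain_in_eval hT hf, chain_out_eval hT hf, (hsat _).1, (hsat _).2] at hb
      rw [dif_pos (by simp)] at hb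
      have hmm := max_sub_max (sp () ⟨n + 1, hi⟩)
      have heq : f (ba ⟨(n + 1) - 1, by show (n + 1) - 1 < T; omega⟩) (ba ⟨n + 1, hi⟩)
          = f (ba ⟨n, hn⟩) (ba ⟨n + 1, hi⟩) := by norm_num
      rw [heq] at hb
      rw [pre_succ, ext_lt (sp ()) hi, ← hprev]
      simp only at hb ⊢
      linarith
  have hchain_le : ∀ i, ∀ hi : i + 1 < T,
      0 ≤ pre (sp ()) (i + 1) ∧ pre (sp ()) (i + 1) ≤ 1 := by
    intro i hi
    have h := claim i (by omega)
    rw [dif_pos hi] at h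
    constructor
    · rw [← h]; exact hf.nonneg _ _
    · rw [← h]
      have := hf.le_cap (ba ⟨i, by show i < T; omega⟩) (ba ⟨i + 1, hi⟩)
      rwa [cap_ba_ba, if_pos (by simp)] at this
  have hpreT : pre (sp ()) T = 0 := by
    have h := claim (T - 1) (by omega)
    rw [dif_neg (by omega), show (T - 1) + 1 = T by omega] at h
    exact h.symm
  have hpre_all : ∀ i, 0 ≤ pre (sp ()) i ∧ pre (sp ()) i ≤ 1 := by
    have hge : ∀ i, T ≤ i → pre (sp ()) i = 0 := by
      intro i hi
      induction i with
      | zero => omega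
      | succ n ih =>
        rcases Nat.lt_or_ge n T with hn | hn
        · have : n + 1 = T := by omega
          rw [this, hpreT]
        · rw [pre_succ, ih hn, ext_ge (sp ()) hn, add_zero]
    intro i
    rcases Nat.eq_zero_or_pos i with rfl | hpos
    · simp [pre]
    rcases Nat.lt_or_ge i T with hi | hi
    · exact hchain_le (i - 1) (by omega) |>.imp (by rw [show i - 1 + 1 = i by omega]; exact id)
        (by rw [show i - 1 + 1 = i by omega]; exact id)
    · rw [hge i hi]; norm_num
  exact ⟨hsign, hpre_all, hpreT⟩

end MaxFlow


lemma abel_utility (p q : Fin T → ℝ) (hpT : pre q T = 0) :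
    -(∑ t, q t * p t)
      = ∑ i ∈ Finset.range (T - 1), (extN p (i + 1) - extN p i) * pre q (i + 1) := by
  have h1 : (∑ t : Fin T, q t * p t) = ∑ i ∈ Finset.range T, extN p i • extN q i := by
    rw [← Fin.sum_univ_eq_sum_range (fun i => extN p i • extN q i) T]
    exact Finset.sum_congr rfl (fun t _ => by
      rw [smul_eq_mul, ext_lt p t.isLt, ext_lt q t.isLt]; exact mul_comm _ _)
  have h2 : (∑ i ∈ Finset.range T, extN q i) = 0 := hpT
  rw [h1, Finset.sum_range_by_parts (extN p) (extN q) T, h2, smul_zero, zero_sub, neg_neg]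
  exact Finset.sum_congr rfl (fun i _ => by rw [smul_eq_mul]; rfl)

def lastOdd (T : ℕ) : ℕ := if T % 2 = 0 then T - 1 else T - 2

lemma lastOdd_facts (hT2 : 2 ≤ T) :
    lastOdd T % 2 = 1 ∧ 1 ≤ lastOdd T ∧ lastOdd T < T := by
  unfold lastOdd; split_ifs <;> omega

lemma lastOdd_cases (hT2 : 2 ≤ T) :
    (T % 2 = 0 ∧ lastOdd T = T - 1) ∨ (T % 2 = 1 ∧ lastOdd T = T - 2) := by
  unfold lastOdd; split_ifs with h
  · exact Or.inl ⟨h, rfl⟩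
  · exact Or.inr ⟨by omega, rfl⟩

def sStar (T : ℕ) : Fin T → ℝ := fun t =>
  if (t : ℕ) = 0 then 1 else if (t : ℕ) = lastOdd T then -1 else 0

lemma pre_sStar (hT2 : 2 ≤ T) (i : ℕ) :
    pre (sStar T) i = if 1 ≤ i ∧ i ≤ lastOdd T then 1 else 0 := by
  obtain ⟨hL2, hL1, hLT⟩ := lastOdd_facts hT2
  induction i with
  | zero => simp [pre]
  | succ n ih =>
    rw [pre_succ, ih]
    have hext : extN (sStar T) n
        = if n = 0 then 1 else if n = lastOdd T then -1 else 0 := by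
      by_cases hn : n < T
      · rw [ext_lt _ hn]; rfl
      · rw [ext_ge _ (by omega), if_neg (by omega), if_neg (by omega)]
    rw [hext]
    by_cases h0 : n = 0
    · subst h0
      rw [if_neg (by omega), if_pos rfl, if_pos (by omega)]; norm_num
    · by_cases hL : n = lastOdd T
      · rw [if_pos (by omega), if_neg h0, if_pos hL, if_neg (by omega)]; norm_num
      · by_cases hlt : n < lastOdd T
        · rw [if_pos (by omega), if_neg h0, if_neg hL, if_pos (by omega)]; norm_num
        · rw [if_neg (by omega), if_neg h0, if_neg hL, if_neg (by omega)]; norm_num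

lemma good_sStar (hT2 : 2 ≤ T) : GoodN T (sStar T) := by
  obtain ⟨hL2, hL1, hLT⟩ := lastOdd_facts hT2
  refine ⟨?_, ?_, ?_⟩
  · intro t
    have hs : sStar T t = if (t : ℕ) = 0 then 1
        else if (t : ℕ) = lastOdd T then -1 else 0 := rfl
    rw [hs]
    by_cases h0 : (t : ℕ) = 0
    · rw [if_pos h0, if_pos (by omega)]; norm_num
    · by_cases hL : (t : ℕ) = lastOdd T
      · rw [if_neg h0, if_pos hL, if_neg (by omega)]; norm_num
      · rw [if_neg h0, if_neg hL]; split_ifs <;> norm_num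
  · intro i
    rw [pre_sStar hT2]; split_ifs <;> norm_num
  · rw [pre_sStar hT2, if_neg (by omega)]

def sOpt (T : ℕ) : Fin T → ℝ := fun t =>
  if (t : ℕ) % 2 = 0 then (if (t : ℕ) + 1 < T then 1 else 0) else -1

lemma pre_sOpt (i : ℕ) : pre (sOpt T) i = if i % 2 = 1 ∧ i < T then 1 else 0 := by
  induction i with
  | zero => simp [pre]
  | succ n ih =>
    rw [pre_succ, ih]
    by_cases hn : n < T
    · rw [ext_lt _ hn]
      have hs : sOpt T ⟨n, hn⟩ = if n % 2 = 0 then (if n + 1 < T then 1 else 0) else -1 := rfl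
      rw [hs]
      split_ifs <;> first | (exfalso; omega) | norm_num
    · rw [ext_ge _ (by omega)]
      split_ifs <;> first | (exfalso; omega) | norm_num

lemma good_sOpt : GoodN T (sOpt T) := by
  refine ⟨?_, ?_, ?_⟩
  · intro t
    have hs : sOpt T t = if (t : ℕ) % 2 = 0 then (if (t : ℕ) + 1 < T then 1 else 0) else -1 := rfl
    by_cases h : (t : ℕ) % 2 = 0
    · rw [if_pos h, hs, if_pos h]; split_ifs <;> norm_num
    · rw [if_neg h, hs, if_neg h]; norm_num
  · intro i
    rw [pre_sOpt]; split_ifs <;> norm_num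
  · rw [pre_sOpt, if_neg (by omega)]


lemma welfare_le_half (sp : Unit → Fin T → ℝ) :
    (game13 T hT).welfare sp ≤ ((T / 2 : ℕ) : ℝ) := by
  apply csSup_le
  · exact ⟨(game13 T hT).value (fun _ _ => 0), fun _ _ => 0, zero_isFlow hT sp, rfl⟩
  · rintro r ⟨g, hg, rfl⟩; exact value_le_half hT hg

lemma valid_of_good (sp : Unit → Fin T → ℝ) (hs : GoodN T (sp ())) :
    (game13 T hT).ValidProfile sp := by
  intro b t ht
  rcases b
  rw [Iic_eq_pre]
  exact ⟨(hs.2.1 _).1, (hs.2.1 _).2⟩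

lemma welfare_sOpt : (game13 T hT).welfare (fun _ => sOpt T) = ((T / 2 : ℕ) : ℝ) := by
  rw [welfare_of_good hT _ good_sOpt]
  rw [← sum_neg_eq_sum_pos (good_sOpt (T := T)).2.2]
  have h : ∀ t : Fin T, max 0 (-(sOpt T t)) = if (t : ℕ) % 2 = 0 then (0:ℝ) else 1 := by
    intro t
    have hs : sOpt T t = if (t : ℕ) % 2 = 0 then (if (t : ℕ) + 1 < T then 1 else 0) else -1 := rfl
    rw [hs]; split_ifs <;> norm_num
  rw [Finset.sum_congr rfl (fun t _ => h t),
    Fin.sum_univ_eq_sum_range (fun i => if i % 2 = 0 then (0:ℝ) else 1) T,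
    sum_indicator_odd]

lemma opt_welfare_eq : (game13 T hT).optWelfare = ((T / 2 : ℕ) : ℝ) := by
  apply le_antisymm
  · apply csSup_le
    · exact ⟨_, (fun _ => sOpt T), valid_of_good hT _ good_sOpt, rfl⟩
    · rintro r ⟨sp, _, rfl⟩; exact welfare_le_half hT sp
  · apply le_csSup
    · exact ⟨((T / 2 : ℕ) : ℝ), by rintro r ⟨sp, _, rfl⟩; exact welfare_le_half hT sp⟩
    · exact ⟨(fun _ => sOpt T), valid_of_good hT _ good_sOpt, welfare_sOpt hT⟩

lemma nash_welfare (hT2 : 2 ≤ T) (p : Fin T → ℝ) (hp : StrictMono p)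
    (s : Unit → Fin T → ℝ) (hn : (game13 T hT).IsNash p s) :
    (game13 T hT).welfare s = 1 := by
  obtain ⟨hL2, hL1, hLT⟩ := lastOdd_facts hT2
  -- step a: s is admissible
  have hzero_good : GoodN T (fun _ : Fin T => (0:ℝ)) := by
    refine ⟨fun t => by split_ifs <;> norm_num, fun i => ?_, ?_⟩
    · have h : pre (fun _ : Fin T => (0:ℝ)) i = 0 :=
        Finset.sum_eq_zero (fun z _ => by unfold extN; split_ifs <;> rfl)
      rw [h]; norm_num
    · exact Finset.sum_eq_zero (fun z _ => by unfold extN; split_ifs <;> rfl)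
  have hvalStar : (game13 T hT).ValidStrategy () (sStar T) :=
    valid_of_good hT (fun _ => sStar T) (good_sStar hT2) ()
  have hupd : @Function.update Unit (fun _ => Fin T → ℝ) (game13 T hT).decB
      s () (sStar T) = (fun _ : Unit => sStar T) := by
    funext b; rcases b; simp
  have hAstar : (game13 T hT).Admissible (fun _ : Unit => sStar T) () :=
    admissible_of_good hT _ (good_sStar hT2)
  have hu2 : (game13 T hT).utility p (fun _ : Unit => sStar T) ()
      = ((-(∑ t, sStar T t * p t) : ℝ) : EReal) := by
    unfold ChargingGame.utility; rw [if_pos hAstar]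
  have hnash2 := hn.2 () (sStar T) hvalStar
  rw [hupd, hu2] at hnash2
  have hadm : (game13 T hT).Admissible s () := by
    by_contra hna
    apply hnash2
    have hu1 : (game13 T hT).utility p s () = ⊥ := by
      unfold ChargingGame.utility
      rw [if_neg hna]
    rw [hu1]
    exact EReal.bot_lt_coe _
  have hgood : GoodN T (s ()) := good_of_admissible hT s hadm
  have hu1 : (game13 T hT).utility p s () = ((-(∑ t, s () t * p t) : ℝ) : EReal) := by
    unfold ChargingGame.utility; rw [if_pos hadm]
  rw [hu1] at hnash2
  have hle : -(∑ t, sStar T t * p t) ≤ -(∑ t, s () t * p t) := by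
    have h := not_lt.mp hnash2
    exact_mod_cast h
  rw [abel_utility p (s ()) hgood.2.2, abel_utility p (sStar T) (good_sStar hT2).2.2] at hle
  -- price increments are positive
  have hΔ : ∀ i, i < T - 1 → 0 < extN p (i + 1) - extN p i := by
    intro i hi
    rw [ext_lt p (by omega : i + 1 < T), ext_lt p (by omega : i < T)]
    have h := hp (show (⟨i, by omega⟩ : Fin T) < ⟨i + 1, by omega⟩ from by
      rw [Fin.mk_lt_mk]; omega)
    linarith
  have hprem1 : T % 2 = 1 → pre (s ()) (T - 1) = 0 := by
    intro hodd
    have h1 : pre (s ()) T = 0 := hgood.2.2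
    have h2 : pre (s ()) T = pre (s ()) (T - 1) + extN (s ()) (T - 1) := by
      rw [← pre_succ, show T - 1 + 1 = T by omega]
    have h3 : 0 ≤ extN (s ()) (T - 1) := by
      rw [ext_lt (s ()) (by omega : T - 1 < T)]
      have h4 := hgood.1 ⟨T - 1, by omega⟩
      rw [if_pos (show ((⟨T - 1, by omega⟩ : Fin T) : ℕ) % 2 = 0 by simp; omega)] at h4
      exact h4.1
    have h5 := (hgood.2.1 (T - 1)).1
    linarith
  have hterm_le : ∀ i ∈ Finset.range (T - 1),
      (extN p (i + 1) - extN p i) * pre (s ()) (i + 1)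
        ≤ (extN p (i + 1) - extN p i) * pre (sStar T) (i + 1) := by
    intro i hi
    rw [Finset.mem_range] at hi
    by_cases hiL : i + 1 ≤ lastOdd T
    · rw [pre_sStar hT2, if_pos ⟨by omega, hiL⟩]
      exact mul_le_mul_of_nonneg_left (hgood.2.1 (i + 1)).2 (le_of_lt (hΔ i hi))
    · have h1 : pre (sStar T) (i + 1) = 0 := by rw [pre_sStar hT2, if_neg (by omega)]
      have h2 : pre (s ()) (i + 1) = 0 := by
        rcases lastOdd_cases hT2 with ⟨hpar, hLv⟩ | ⟨hpar, hLv⟩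
        · exfalso; omega
        · rw [show i + 1 = T - 1 by omega]; exact hprem1 hpar
      rw [h1, h2]
  have hsum_eq : (∑ i ∈ Finset.range (T - 1), (extN p (i + 1) - extN p i) * pre (s ()) (i + 1))
      = ∑ i ∈ Finset.range (T - 1), (extN p (i + 1) - extN p i) * pre (sStar T) (i + 1) :=
    le_antisymm (Finset.sum_le_sum hterm_le) hle
  have hterm_eq := (Finset.sum_eq_sum_iff_of_le hterm_le).1 hsum_eq
  have hforce : ∀ i, i < T - 1 → i + 1 ≤ lastOdd T → pre (s ()) (i + 1) = 1 := by
    intro i hi hiL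
    have h := hterm_eq i (Finset.mem_range.2 hi)
    rw [pre_sStar hT2, if_pos ⟨by omega, hiL⟩] at h
    exact mul_left_cancel₀ (ne_of_gt (hΔ i hi)) h
  have hPfull : ∀ i, i ≤ T → pre (s ()) i = if 1 ≤ i ∧ i ≤ lastOdd T then 1 else 0 := by
    intro i hi
    by_cases h1 : 1 ≤ i ∧ i ≤ lastOdd T
    · rw [if_pos h1]
      have h := hforce (i - 1) (by omega) (by omega)
      rwa [show i - 1 + 1 = i by omega] at h
    · rw [if_neg h1]
      by_cases h0 : i = 0
      · rw [h0]; simp [pre]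
      · have hiL : lastOdd T < i := by omega
        by_cases hiT : i = T
        · rw [hiT]; exact hgood.2.2
        · rcases lastOdd_cases hT2 with ⟨hpar, hLv⟩ | ⟨hpar, hLv⟩
          · exfalso; omega
          · rw [show i = T - 1 by omega]; exact hprem1 hpar
  -- the welfare computation
  rw [welfare_of_good hT s hgood]
  have hterm : ∀ i, i < T → extN (s ()) i
      = if i = 0 then 1 else if i = lastOdd T then -1 else 0 := by
    intro i hi
    have h3 : extN (s ()) i = pre (s ()) (i + 1) - pre (s ()) i := by rw [pre_succ]; ring
    rw [h3, hPfull i (by omega), hPfull (i + 1) (by omega)]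
    by_cases h0 : i = 0
    · rw [if_pos (show 1 ≤ i + 1 ∧ i + 1 ≤ lastOdd T by omega),
        if_neg (show ¬(1 ≤ i ∧ i ≤ lastOdd T) by omega), if_pos h0]
      norm_num
    · by_cases hL : i = lastOdd T
      · rw [if_neg (show ¬(1 ≤ i + 1 ∧ i + 1 ≤ lastOdd T) by omega),
          if_pos (show 1 ≤ i ∧ i ≤ lastOdd T by omega), if_neg h0, if_pos hL]
        norm_num
      · by_cases hlt : i < lastOdd T
        · rw [if_pos (show 1 ≤ i + 1 ∧ i + 1 ≤ lastOdd T by omega),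
            if_pos (show 1 ≤ i ∧ i ≤ lastOdd T by omega), if_neg h0, if_neg hL]
          norm_num
        · rw [if_neg (show ¬(1 ≤ i + 1 ∧ i + 1 ≤ lastOdd T) by omega),
            if_neg (show ¬(1 ≤ i ∧ i ≤ lastOdd T) by omega), if_neg h0, if_neg hL]
          norm_num
  have hsum : (∑ t, max 0 (s () t)) = ∑ i ∈ Finset.range T, max 0 (extN (s ()) i) := by
    rw [sum_univ_eq_pre (fun t => max 0 (s () t)), pre]
    refine Finset.sum_congr rfl (fun i hi => ?_)
    rw [ext_lt _ (Finset.mem_range.1 hi), ext_lt _ (Finset.mem_range.1 hi)]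
  rw [hsum]
  have hmax : ∀ i ∈ Finset.range T, max 0 (extN (s ()) i) = if i = 0 then (1:ℝ) else 0 := by
    intro i hi
    rw [hterm i (Finset.mem_range.1 hi)]
    by_cases h0 : i = 0
    · rw [if_pos h0, if_pos h0]; norm_num
    · rw [if_neg h0, if_neg h0]
      by_cases hL : i = lastOdd T
      · rw [if_pos hL]; norm_num
      · rw [if_neg hL]; norm_num
  rw [Finset.sum_congr rfl hmax, Finset.sum_ite_eq' (Finset.range T) 0 (fun _ => (1:ℝ)),
    if_pos (Finset.mem_range.2 (by omega))]

end CG13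

/-- For every `T ≥ 2`, in the instance `game13 T`, the maximum welfare
over all strategy profiles equals `⌊T/2⌋`, while for every strictly ascending price
profile every Nash equilibrium has welfare exactly `1`; hence the price of stability
for ascending prices is at least `⌊T/2⌋`. -/
theorem pos_ascending_at_least_half_T (T : ℕ) (hT : 2 ≤ T) :
    (game13 T (by omega)).optWelfare = ((T / 2 : ℕ) : ℝ) ∧
    ∀ p : Fin T → ℝ, StrictMono p →
      ∀ s : Unit → Fin T → ℝ, (game13 T (by omega)).IsNash p s →
        (game13 T (by omega)).welfare s = 1 := by
  constructor
  · exact CG13.opt_welfare_eq (by omega)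
  · intro p hp s hn
    exact CG13.nash_welfare (by omega) hT p hp s hn
end

section
/- For every T∈ℕ with T > 2 and every k ≤ T−2, there exists an instance of the charging game with T time steps (namely: H is the directed path (v¹,…,v^{T−1}) with one battery agent of capacity 1 at each vertex; d(v¹_1)=+1, d(v^{T−1}_T)=−1, all other demands 0; grid edge capacities are 1 for edges (v^i_{i+1}, v^{i+1}_{i+1}) for i ≤ T−2 and 0 for all other grid edges) such that for every price profile p∈ℝ^T, the all-zero strategy profile is a k-strong equilibrium with welfare 0, while the maximum welfare over all strategy profiles is 1; hence the k-strong price of anarchy is infinite for every price profile whenever k ≤ T−2. -/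
/-- The instance of STATEMENT 15 for `T > 2` time steps: `H` is the directed path
`(v¹, …, v^{T-1})` (indices `0, …, T-2`) with one battery agent of capacity `1` at
each vertex; `d(v¹_1) = +1`, `d(v^{T-1}_T) = -1`, all other demands `0`; the grid edge
capacities are `1` for the edges `(v^i_{i+1}, v^{i+1}_{i+1})` for `i ≤ T-2`
(in 0-based indexing: the copy of edge `(u, u+1)` in time step `u + 1`) and `0` for
all other grid edges. -/
noncomputable def game15 (T : ℕ) (hT : 2 < T) : ChargingGame where
  V := Fin (T - 1)
  fintypeV := inferInstance
  decV := inferInstance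
  T := T
  T_pos := by omega
  E := Finset.univ.filter (fun e : Fin (T - 1) × Fin (T - 1) => e.2.val = e.1.val + 1)
  κE := fun t e => if e.2.val = e.1.val + 1 ∧ t.val = e.1.val + 1 then 1 else 0
  κE_nonneg := by intro t e; (try dsimp only); split <;> norm_num
  d := fun t v =>
    if t.val = 0 ∧ v.val = 0 then 1
    else if t.val = T - 1 ∧ v.val = T - 2 then -1 else 0
  B := Fin (T - 1)
  fintypeB := inferInstance
  decB := inferInstance
  loc := id
  κB := fun _ _ => 1
  κB_nonneg := fun _ _ => zero_le_one

section Aux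

open Finset

lemma sum_ite_unique {α : Type*} [Fintype α] [DecidableEq α] (P : α → Prop) [DecidablePred P]
    (a : α) (h : ∀ x, P x → x = a) :
    (∑ x, if P x then (1:ℝ) else 0) = if P a then 1 else 0 := by
  rw [Finset.sum_eq_single a]
  · intro b _ hb
    simp only [ite_eq_right_iff]
    intro hPb; exact absurd (h b hPb) hb
  · simp

lemma cut_bound (G : ChargingGame) (c f : G.Node → G.Node → ℝ)
    (hf : G.IsFlow c f) (S : Finset G.Node)
    (hx : G.source ∈ S) (hy : G.sink ∉ S)
    (hcx : ∀ w, c w G.source = 0)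
    (hcut : ∀ u ∈ S, ∀ w ∉ S, c u w = 0) :
    G.value f ≤ 0 := by
  classical
  have hin : ∀ u, f u G.source = 0 := fun u =>
    le_antisymm (by simpa [hcx u] using hf.le_cap u G.source) (hf.nonneg u G.source)
  have h1 : ∑ u ∈ S, ((∑ w, f u w) - (∑ w, f w u)) = G.value f := by
    rw [Finset.sum_eq_single_of_mem G.source hx]
    · simp [ChargingGame.value, hin]
    · intro u hu hne
      have hns : u ≠ G.sink := fun h => hy (h ▸ hu)
      rw [hf.conserve u hne hns]; ring
  rw [← h1]
  have split1 : ∀ g : G.Node → ℝ, (∑ w, g w) = ∑ w ∈ S, g w + ∑ w ∈ Sᶜ, g w :=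
    fun g => (Finset.sum_add_sum_compl S g).symm
  have hre : ∀ u, ((∑ w, f u w) - (∑ w, f w u))
      = ((∑ w ∈ S, f u w) - (∑ w ∈ S, f w u)) + ((∑ w ∈ Sᶜ, f u w) - (∑ w ∈ Sᶜ, f w u)) := by
    intro u; rw [split1 (f u), split1 (fun w => f w u)]; ring
  calc ∑ u ∈ S, ((∑ w, f u w) - (∑ w, f w u))
      = (∑ u ∈ S, ∑ w ∈ S, f u w - ∑ u ∈ S, ∑ w ∈ S, f w u)
        + (∑ u ∈ S, ∑ w ∈ Sᶜ, f u w - ∑ u ∈ S, ∑ w ∈ Sᶜ, f w u) := by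
        simp only [hre, Finset.sum_add_distrib, Finset.sum_sub_distrib]
    _ = (∑ u ∈ S, ∑ w ∈ Sᶜ, f u w) - ∑ u ∈ S, ∑ w ∈ Sᶜ, f w u := by
        rw [Finset.sum_comm (s := S) (t := S) (f := fun u w => f u w)]
        ring
    _ ≤ 0 - 0 := by
        apply sub_le_sub
        · apply Finset.sum_nonpos; intro u hu
          apply Finset.sum_nonpos; intro w hw
          have h0 := hcut u hu w (by simpa using Finset.mem_compl.mp hw)
          linarith [hf.le_cap u w]
        · apply Finset.sum_nonneg; intro u _
          exact Finset.sum_nonneg fun w _ => hf.nonneg w u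
    _ = 0 := by ring

end Aux
lemma cap_nonneg (G : ChargingGame) (s : G.B → Fin G.T → ℝ) (u v : G.Node) :
    0 ≤ G.cap s u v := by
  rcases u with ⟨t, x⟩ | ⟨⟨t, b⟩ | (_|_)⟩ <;> rcases v with ⟨t', x'⟩ | ⟨⟨t', b'⟩ | (_|_)⟩ <;>
    simp only [ChargingGame.cap] <;> (try split_ifs) <;>
    first
      | exact le_refl 0
      | exact le_max_left 0 _
      | exact G.κE_nonneg _ _
      | exact G.κB_nonneg _ _

lemma zero_isFlow (G : ChargingGame) (c : G.Node → G.Node → ℝ) (hc : ∀ u v, 0 ≤ c u v) :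
    G.IsFlow c (fun _ _ => 0) :=
  ⟨fun _ _ => le_refl 0, fun u v => hc u v, fun _ _ _ => rfl⟩

lemma zero_value (G : ChargingGame) : G.value (fun _ _ => 0) = 0 := by
  simp [ChargingGame.value]

lemma value_nonneg (G : ChargingGame) (c f : G.Node → G.Node → ℝ) (hf : G.IsFlow c f) :
    0 ≤ G.value f :=
  Finset.sum_nonneg fun v _ => hf.nonneg _ v

def cutP (T : ℕ) (j : Fin (T-1)) :
    (Fin T × Fin (T-1)) ⊕ ((Fin T × Fin (T-1)) ⊕ Bool) → Prop := fun n =>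
  match n with
  | Sum.inl (t, v) => v.val < j.val ∨ (v.val = j.val ∧ t.val ≤ j.val)
  | Sum.inr (Sum.inl (_, b)) => b.val < j.val
  | Sum.inr (Sum.inr bb) => bb = false

instance (T : ℕ) (j : Fin (T-1)) : DecidablePred (cutP T j) := fun n => by
  rcases n with ⟨t, v⟩ | ⟨⟨t, b⟩ | bb⟩ <;> unfold cutP <;> infer_instance
section G15
variable {T : ℕ} {hT : 2 < T}

lemma game15_loc (b : Fin (T-1)) : (game15 T hT).loc b = b := rfl
lemma game15_κB (b : Fin (T-1)) (t : Fin T) : (game15 T hT).κB b t = 1 := rfl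
lemma game15_d (t : Fin T) (v : Fin (T-1)) :
    (game15 T hT).d t v
      = if t.val = 0 ∧ v.val = 0 then 1
        else if t.val = T - 1 ∧ v.val = T - 2 then -1 else 0 := rfl
lemma game15_κE (t : Fin T) (e : Fin (T-1) × Fin (T-1)) :
    (game15 T hT).κE t e = if e.2.val = e.1.val + 1 ∧ t.val = e.1.val + 1 then 1 else 0 := rfl
lemma game15_mem_E (e : Fin (T-1) × Fin (T-1)) :
    e ∈ (game15 T hT).E ↔ e.2.val = e.1.val + 1 := by
  show e ∈ Finset.univ.filter _ ↔ _
  simp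

lemma game15_loc' (b : (game15 T hT).B) : (game15 T hT).loc b = b := rfl
lemma game15_κB' (b : (game15 T hT).B) (t : Fin (game15 T hT).T) : (game15 T hT).κB b t = 1 := rfl
lemma game15_d' (t : Fin (game15 T hT).T) (v : (game15 T hT).V) :
    (game15 T hT).d t v
      = if (t : Fin T).val = 0 ∧ (v : Fin (T-1)).val = 0 then 1
        else if (t : Fin T).val = T - 1 ∧ (v : Fin (T-1)).val = T - 2 then -1 else 0 := rfl
lemma game15_κE' (t : Fin (game15 T hT).T) (e : (game15 T hT).V × (game15 T hT).V) :
    (game15 T hT).κE t e = if (e.2 : Fin (T-1)).val = (e.1 : Fin (T-1)).val + 1 ∧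
      (t : Fin T).val = (e.1 : Fin (T-1)).val + 1 then 1 else 0 := rfl

lemma flow_value_zero (s : Fin (T-1) → Fin T → ℝ)
    (j : Fin (T-1)) (hj : ∀ t, s j t = 0)
    (f : (game15 T hT).Node → (game15 T hT).Node → ℝ)
    (hf : (game15 T hT).IsFlow ((game15 T hT).cap s) f) :
    (game15 T hT).value f = 0 := by
  refine le_antisymm ?_ (value_nonneg _ _ _ hf)
  refine cut_bound _ _ f hf (@Finset.filter (game15 T hT).Node (cutP T j) (Classical.decPred _) Finset.univ) ?_ ?_ ?_ ?_
  · refine (@Finset.mem_filter (game15 T hT).Node (cutP T j) (Classical.decPred _) Finset.univ _).mpr ⟨Finset.mem_univ _, ?_⟩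
    show cutP T j (Sum.inr (Sum.inr false))
    simp [cutP]
  · refine fun h => (?_ : ¬ cutP T j (Sum.inr (Sum.inr true))) ((@Finset.mem_filter (game15 T hT).Node (cutP T j) (Classical.decPred _) Finset.univ _).mp h).2
    show ¬ cutP T j (Sum.inr (Sum.inr true))
    simp [cutP]
  · intro w
    rcases w with ⟨t, v⟩ | ⟨⟨t, b⟩ | (_|_)⟩ <;> rfl
  · intro u hu w hw
    replace hu : cutP T j u := ((@Finset.mem_filter (game15 T hT).Node (cutP T j) (Classical.decPred _) Finset.univ _).mp hu).2
    replace hw : ¬ cutP T j w := fun h => hw ((@Finset.mem_filter (game15 T hT).Node (cutP T j) (Classical.decPred _) Finset.univ _).mpr ⟨Finset.mem_univ _, h⟩)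
    rcases u with ⟨t, v⟩ | ⟨⟨t, b⟩ | (_|_)⟩ <;> rcases w with ⟨t', v'⟩ | ⟨⟨t', b'⟩ | (_|_)⟩
    -- grid → grid
    · simp only [cutP] at hu hw
      simp only [ChargingGame.cap, game15_κE, game15_κE']
      split_ifs with h1 h2
      · exfalso
        obtain ⟨rfl, hE⟩ := h1
        omega
      · rfl
      · rfl
    -- grid → battery
    · simp only [cutP] at hu hw
      simp only [ChargingGame.cap, game15_loc, game15_loc']
      split_ifs with h1
      · obtain ⟨rfl, rfl⟩ := h1
        have hbj : b' = j := Fin.ext (by omega)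
        subst hbj
        rw [show s b' t = 0 from hj t]
        simp only [max_self]; exact ite_self _
      · exact if_neg h1
    -- grid → x
    · rfl
    -- grid → y
    · simp only [cutP] at hu hw
      simp only [ChargingGame.cap, game15_d, game15_d']
      have hjlt := j.isLt
      split_ifs with h1 h2
      · norm_num
      · exfalso; omega
      · simp
    -- battery → grid
    · simp only [cutP] at hu hw
      simp only [ChargingGame.cap, game15_loc, game15_loc']
      split_ifs with h1
      · exfalso
        obtain ⟨rfl, rfl⟩ := h1
        omega
      · exact if_neg h1
    -- battery → battery
    · simp only [cutP] at hu hw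
      simp only [ChargingGame.cap, game15_κB, game15_κB']
      split_ifs with h1
      · exfalso
        obtain ⟨rfl, -⟩ := h1
        omega
      · rfl
    · rfl
    · rfl
    -- x → grid
    · simp only [cutP] at hu hw
      simp only [ChargingGame.cap, game15_d, game15_d']
      split_ifs with h1 h2
      · exfalso; omega
      · norm_num
      · simp
    · rfl
    · rfl
    · rfl
    -- y → ...
    · simp only [cutP] at hu; exact absurd hu (by simp)
    · simp only [cutP] at hu; exact absurd hu (by simp)
    · simp only [cutP] at hu; exact absurd hu (by simp)
    · simp only [cutP] at hu; exact absurd hu (by simp)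

end G15
section G15b
variable {T : ℕ} {hT : 2 < T}

lemma zero_isMaxFlow (s : Fin (T-1) → Fin T → ℝ)
    (j : Fin (T-1)) (hj : ∀ t, s j t = 0) :
    (game15 T hT).IsMaxFlow ((game15 T hT).cap s) (fun _ _ => 0) := by
  refine ⟨zero_isFlow _ _ (cap_nonneg _ _), fun g hg => ?_⟩
  rw [flow_value_zero s j hj g hg, zero_value]

lemma welfare_zero_profile (s : Fin (T-1) → Fin T → ℝ)
    (j : Fin (T-1)) (hj : ∀ t, s j t = 0) :
    (game15 T hT).welfare s = 0 := by
  have hgr : IsGreatest {r | ∃ f, (game15 T hT).IsFlow ((game15 T hT).cap s) f ∧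
      (game15 T hT).value f = r} 0 := by
    constructor
    · exact ⟨fun _ _ => 0, zero_isFlow _ _ (cap_nonneg _ _), zero_value _⟩
    · rintro r ⟨f, hf, rfl⟩
      exact le_of_eq (flow_value_zero s j hj f hf)
  exact hgr.csSup_eq

lemma validProfile_zero : (game15 T hT).ValidProfile (fun _ _ => 0) := by
  intro b t ht
  simp [game15_κB]
  exact (game15 T hT).κB_nonneg b t

lemma admissible_zero (b : Fin (T-1)) :
    (game15 T hT).Admissible (fun _ _ => 0) b := by
  intro f hf t
  have hc1 : (game15 T hT).cap (fun _ _ => 0) ((game15 T hT).gridNode t ((game15 T hT).loc b))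
      ((game15 T hT).batNode t b) = 0 := by
    simp [ChargingGame.cap]
  have hc2 : (game15 T hT).cap (fun _ _ => 0) ((game15 T hT).batNode t b)
      ((game15 T hT).gridNode t ((game15 T hT).loc b)) = 0 := by
    simp [ChargingGame.cap]
  constructor
  · rw [hc1]
    exact le_antisymm (by rw [← hc1]; exact hf.1.le_cap _ _) (hf.1.nonneg _ _)
  · rw [hc2]
    exact le_antisymm (by rw [← hc2]; exact hf.1.le_cap _ _) (hf.1.nonneg _ _)

lemma utility_zero (p : Fin T → ℝ) (b : Fin (T-1)) :
    (game15 T hT).utility p (fun _ _ => 0) b = ((0:ℝ) : EReal) := by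
  unfold ChargingGame.utility; rw [if_pos (admissible_zero b)]
  norm_num

lemma strong_eq (k : ℕ) (hk : k ≤ T - 2) (p : Fin T → ℝ) :
    (game15 T hT).IsStrongEq k p (fun _ _ => 0) := by
  refine ⟨validProfile_zero, ?_⟩
  intro C hCne hCk s' hs'valid hs'out himp
  -- there is an agent outside the coalition
  obtain ⟨j, hj⟩ : ∃ j : Fin (T-1), j ∉ C := by
    by_contra h
    push_neg at h
    have : C = Finset.univ := Finset.eq_univ_iff_forall.mpr h
    have hcard : C.card = T - 1 := by rw [this, Finset.card_univ]; exact Fintype.card_fin (T-1)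
    omega
  have hjz : ∀ t, s' j t = 0 := fun t => by rw [hs'out j hj]
  obtain ⟨b, hb⟩ := hCne
  have hlt := himp b hb
  rw [show (game15 T hT).utility p (fun _ _ => 0) b = ((0:ℝ):EReal) from utility_zero p b] at hlt
  have hle : (game15 T hT).utility p s' b ≤ ((0:ℝ) : EReal) := by
    unfold ChargingGame.utility
    split_ifs with hadm
    · have hzero : ∀ t, s' b t = 0 := by
        intro t
        have hmax := hadm (fun _ _ => 0) (zero_isMaxFlow s' j hjz) t
        have h1 : (game15 T hT).cap s' ((game15 T hT).gridNode t ((game15 T hT).loc b))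
            ((game15 T hT).batNode t b) = 0 ⊔ s' b t := by
          simp [ChargingGame.cap]
        have h2 : (game15 T hT).cap s' ((game15 T hT).batNode t b)
            ((game15 T hT).gridNode t ((game15 T hT).loc b)) = 0 ⊔ -(s' b t) := by
          simp [ChargingGame.cap]
        have e1 := hmax.1
        have e2 := hmax.2
        rw [h1] at e1
        rw [h2] at e2
        have l1 : s' b t ≤ 0 ⊔ s' b t := le_max_right _ _
        have l2 : -(s' b t) ≤ 0 ⊔ -(s' b t) := le_max_right _ _
        rw [← e1] at l1
        rw [← e2] at l2
        linarith
      simp only [hzero, zero_mul, Finset.sum_const_zero, neg_zero]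
      exact le_refl _
    · exact bot_le
  exact absurd (lt_of_lt_of_le hlt hle) (lt_irrefl _)

end G15b
section Opt

lemma sum_ite_count {α : Type*} [Fintype α] [DecidableEq α] (P : α → Prop) [DecidablePred P]
    (c : Prop) [Decidable c] (h1 : c → ∃ a, P a) (h2 : ∀ x, P x → c)
    (h3 : ∀ x y, P x → P y → x = y) :
    (∑ x, if P x then (1:ℝ) else 0) = if c then 1 else 0 := by
  by_cases hc : c
  · obtain ⟨a, ha⟩ := h1 hc
    rw [if_pos hc, Finset.sum_eq_single a]
    · rw [if_pos ha]
    · intro b _ hne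
      rw [if_neg]
      intro hPb
      exact hne (h3 b a hPb ha)
    · intro h; exact absurd (Finset.mem_univ a) h
  · rw [if_neg hc]
    apply Finset.sum_eq_zero
    intro x _
    rw [if_neg (fun hPx => hc (h2 x hPx))]

variable {T : ℕ} {hT : 2 < T}

def sStar (T : ℕ) : Fin (T-1) → Fin T → ℝ := fun b t =>
  if t.val = b.val then 1 else if t.val = b.val + 1 then -1 else 0

def fStar (T : ℕ) :
    ((Fin T × Fin (T-1)) ⊕ ((Fin T × Fin (T-1)) ⊕ Bool)) →
    ((Fin T × Fin (T-1)) ⊕ ((Fin T × Fin (T-1)) ⊕ Bool)) → ℝ := fun u w =>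
  match u, w with
  | Sum.inr (Sum.inr false), Sum.inl (t, v) => if t.val = 0 ∧ v.val = 0 then 1 else 0
  | Sum.inl (t, v), Sum.inl (t', v') =>
      if t' = t ∧ t.val = v.val + 1 ∧ v'.val = v.val + 1 then 1 else 0
  | Sum.inl (t, v), Sum.inr (Sum.inl (t', b)) =>
      if t' = t ∧ b = v ∧ t.val = v.val then 1 else 0
  | Sum.inr (Sum.inl (t, b)), Sum.inl (t', v) =>
      if t' = t ∧ v = b ∧ t.val = b.val + 1 then 1 else 0
  | Sum.inr (Sum.inl (t, b)), Sum.inr (Sum.inl (t', b')) =>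
      if b' = b ∧ t'.val = t.val + 1 ∧ t.val = b.val then 1 else 0
  | Sum.inl (t, v), Sum.inr (Sum.inr true) => if t.val = T - 1 ∧ v.val = T - 2 then 1 else 0
  | _, _ => 0

example (x : Fin T × Fin (T-1)) (t : Fin T) (v : Fin (T-1)) :
    fStar T (Sum.inl x) (Sum.inl (t, v))
      = if t = x.1 ∧ x.1.val = x.2.val + 1 ∧ v.val = x.2.val + 1 then 1 else 0 := rfl

end Opt
section Cons
variable {T : ℕ}

lemma conserve_grid (hT' : 2 < T) (t : Fin T) (v : Fin (T-1)) :
    (∑ u, fStar T u (Sum.inl (t, v))) = ∑ w, fStar T (Sum.inl (t, v)) w := by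
  have hv := v.isLt
  have ht := t.isLt
  rw [Fintype.sum_sum_type, Fintype.sum_sum_type, Fintype.sum_bool,
      Fintype.sum_sum_type, Fintype.sum_sum_type, Fintype.sum_bool]
  have hA2 : (∑ x : Fin T × Fin (T-1), fStar T (Sum.inl x) (Sum.inl (t, v)))
      = if t.val = v.val ∧ 1 ≤ v.val then 1 else 0 := by
    refine sum_ite_count
      (fun x : Fin T × Fin (T-1) => t = x.1 ∧ x.1.val = x.2.val + 1 ∧ v.val = x.2.val + 1) _ ?_ ?_ ?_
    · intro hc
      exact ⟨(t, ⟨v.val - 1, by omega⟩), rfl, show t.val = v.val - 1 + 1 by omega, show v.val = v.val - 1 + 1 by omega⟩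
    · rintro ⟨t', v'⟩ ⟨h1, h2, h3⟩
      have e1 : t.val = t'.val := congrArg Fin.val h1
      have e2 : t'.val = v'.val + 1 := h2
      have e3 : v.val = v'.val + 1 := h3
      omega
    · rintro ⟨a1, a2⟩ ⟨b1, b2⟩ ⟨ha1, ha2, ha3⟩ ⟨hb1, hb2, hb3⟩
      have ea1 : t.val = a1.val := congrArg Fin.val ha1
      have ea2 : a1.val = a2.val + 1 := ha2
      have ea3 : v.val = a2.val + 1 := ha3
      have eb1 : t.val = b1.val := congrArg Fin.val hb1
      have eb2 : b1.val = b2.val + 1 := hb2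
      have eb3 : v.val = b2.val + 1 := hb3
      rw [Prod.mk.injEq]
      exact ⟨Fin.ext (by omega), Fin.ext (by omega)⟩
  have hA3 : (∑ x : Fin T × Fin (T-1), fStar T (Sum.inr (Sum.inl x)) (Sum.inl (t, v)))
      = if t.val = v.val + 1 then 1 else 0 := by
    refine sum_ite_count
      (fun x : Fin T × Fin (T-1) => t = x.1 ∧ v = x.2 ∧ x.1.val = x.2.val + 1) _ ?_ ?_ ?_
    · intro hc
      exact ⟨(t, v), rfl, rfl, hc⟩
    · rintro ⟨t', v'⟩ ⟨h1, h2, h3⟩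
      have e1 : t.val = t'.val := congrArg Fin.val h1
      have e2 : v.val = v'.val := congrArg Fin.val h2
      have e3 : t'.val = v'.val + 1 := h3
      omega
    · rintro ⟨a1, a2⟩ ⟨b1, b2⟩ ⟨ha1, ha2, ha3⟩ ⟨hb1, hb2, hb3⟩
      have ea1 : t.val = a1.val := congrArg Fin.val ha1
      have ea2 : v.val = a2.val := congrArg Fin.val ha2
      have eb1 : t.val = b1.val := congrArg Fin.val hb1
      have eb2 : v.val = b2.val := congrArg Fin.val hb2
      rw [Prod.mk.injEq]
      exact ⟨Fin.ext (by omega), Fin.ext (by omega)⟩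
  have hB1 : (∑ x : Fin T × Fin (T-1), fStar T (Sum.inl (t, v)) (Sum.inr (Sum.inl x)))
      = if t.val = v.val then 1 else 0 := by
    refine sum_ite_count
      (fun x : Fin T × Fin (T-1) => x.1 = t ∧ x.2 = v ∧ t.val = v.val) _ ?_ ?_ ?_
    · intro hc
      exact ⟨(t, v), rfl, rfl, hc⟩
    · rintro ⟨t', v'⟩ ⟨h1, h2, h3⟩
      have e3 : t.val = v.val := h3
      omega
    · rintro ⟨a1, a2⟩ ⟨b1, b2⟩ ⟨ha1, ha2, ha3⟩ ⟨hb1, hb2, hb3⟩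
      have ea1 : a1.val = t.val := congrArg Fin.val ha1
      have ea2 : a2.val = v.val := congrArg Fin.val ha2
      have eb1 : b1.val = t.val := congrArg Fin.val hb1
      have eb2 : b2.val = v.val := congrArg Fin.val hb2
      rw [Prod.mk.injEq]
      exact ⟨Fin.ext (by omega), Fin.ext (by omega)⟩
  have hB2 : (∑ x : Fin T × Fin (T-1), fStar T (Sum.inl (t, v)) (Sum.inl x))
      = if t.val = v.val + 1 ∧ v.val + 1 < T - 1 then 1 else 0 := by
    refine sum_ite_count
      (fun x : Fin T × Fin (T-1) => x.1 = t ∧ t.val = v.val + 1 ∧ x.2.val = v.val + 1) _ ?_ ?_ ?_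
    · intro hc
      exact ⟨(t, ⟨v.val + 1, hc.2⟩), rfl, hc.1, rfl⟩
    · rintro ⟨t', v'⟩ ⟨h1, h2, h3⟩
      have e2 : t.val = v.val + 1 := h2
      have e3 : v'.val = v.val + 1 := h3
      have e4 : v'.val < T - 1 := v'.isLt
      omega
    · rintro ⟨a1, a2⟩ ⟨b1, b2⟩ ⟨ha1, ha2, ha3⟩ ⟨hb1, hb2, hb3⟩
      have ea1 : a1.val = t.val := congrArg Fin.val ha1
      have ea3 : a2.val = v.val + 1 := ha3
      have eb1 : b1.val = t.val := congrArg Fin.val hb1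
      have eb3 : b2.val = v.val + 1 := hb3
      rw [Prod.mk.injEq]
      exact ⟨Fin.ext (by omega), Fin.ext (by omega)⟩
  have e1 : fStar T (Sum.inr (Sum.inr true)) (Sum.inl (t, v)) = 0 := rfl
  have e2 : fStar T (Sum.inr (Sum.inr false)) (Sum.inl (t, v))
      = if t.val = 0 ∧ v.val = 0 then 1 else 0 := rfl
  have e3 : fStar T (Sum.inl (t, v)) (Sum.inr (Sum.inr true))
      = if t.val = T - 1 ∧ v.val = T - 2 then 1 else 0 := rfl
  have e4 : fStar T (Sum.inl (t, v)) (Sum.inr (Sum.inr false)) = 0 := rfl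
  rw [hA2, hA3, hB1, hB2, e1, e2, e3, e4]
  split_ifs <;> first | (exfalso; omega) | norm_num

lemma conserve_batt (hT' : 2 < T) (t : Fin T) (b : Fin (T-1)) :
    (∑ u, fStar T u (Sum.inr (Sum.inl (t, b)))) = ∑ w, fStar T (Sum.inr (Sum.inl (t, b))) w := by
  have hb := b.isLt
  have ht := t.isLt
  rw [Fintype.sum_sum_type, Fintype.sum_sum_type, Fintype.sum_bool,
      Fintype.sum_sum_type, Fintype.sum_sum_type, Fintype.sum_bool]
  have hC1 : (∑ x : Fin T × Fin (T-1), fStar T (Sum.inl x) (Sum.inr (Sum.inl (t, b))))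
      = if t.val = b.val then 1 else 0 := by
    refine sum_ite_count
      (fun x : Fin T × Fin (T-1) => t = x.1 ∧ b = x.2 ∧ x.1.val = x.2.val) _ ?_ ?_ ?_
    · intro hc
      exact ⟨(t, b), rfl, rfl, hc⟩
    · rintro ⟨t', v'⟩ ⟨h1, h2, h3⟩
      have e1 : t.val = t'.val := congrArg Fin.val h1
      have e2 : b.val = v'.val := congrArg Fin.val h2
      have e3 : t'.val = v'.val := h3
      omega
    · rintro ⟨a1, a2⟩ ⟨b1, b2⟩ ⟨ha1, ha2, ha3⟩ ⟨hb1, hb2, hb3⟩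
      have ea1 : t.val = a1.val := congrArg Fin.val ha1
      have ea2 : b.val = a2.val := congrArg Fin.val ha2
      have eb1 : t.val = b1.val := congrArg Fin.val hb1
      have eb2 : b.val = b2.val := congrArg Fin.val hb2
      rw [Prod.mk.injEq]
      exact ⟨Fin.ext (by omega), Fin.ext (by omega)⟩
  have hC2 : (∑ x : Fin T × Fin (T-1), fStar T (Sum.inr (Sum.inl x)) (Sum.inr (Sum.inl (t, b))))
      = if t.val = b.val + 1 then 1 else 0 := by
    refine sum_ite_count
      (fun x : Fin T × Fin (T-1) => b = x.2 ∧ t.val = x.1.val + 1 ∧ x.1.val = x.2.val) _ ?_ ?_ ?_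
    · intro hc
      exact ⟨(⟨t.val - 1, by omega⟩, b), rfl, show t.val = t.val - 1 + 1 by omega, show t.val - 1 = b.val by omega⟩
    · rintro ⟨t', v'⟩ ⟨h1, h2, h3⟩
      have e1 : b.val = v'.val := congrArg Fin.val h1
      have e2 : t.val = t'.val + 1 := h2
      have e3 : t'.val = v'.val := h3
      omega
    · rintro ⟨a1, a2⟩ ⟨b1, b2⟩ ⟨ha1, ha2, ha3⟩ ⟨hb1, hb2, hb3⟩
      have ea1 : b.val = a2.val := congrArg Fin.val ha1
      have ea2 : t.val = a1.val + 1 := ha2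
      have ea3 : a1.val = a2.val := ha3
      have eb1 : b.val = b2.val := congrArg Fin.val hb1
      have eb2 : t.val = b1.val + 1 := hb2
      have eb3 : b1.val = b2.val := hb3
      rw [Prod.mk.injEq]
      exact ⟨Fin.ext (by omega), Fin.ext (by omega)⟩
  have hD1 : (∑ x : Fin T × Fin (T-1), fStar T (Sum.inr (Sum.inl (t, b))) (Sum.inl x))
      = if t.val = b.val + 1 then 1 else 0 := by
    refine sum_ite_count
      (fun x : Fin T × Fin (T-1) => x.1 = t ∧ x.2 = b ∧ t.val = b.val + 1) _ ?_ ?_ ?_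
    · intro hc
      exact ⟨(t, b), rfl, rfl, hc⟩
    · rintro ⟨t', v'⟩ ⟨h1, h2, h3⟩
      have e3 : t.val = b.val + 1 := h3
      omega
    · rintro ⟨a1, a2⟩ ⟨b1, b2⟩ ⟨ha1, ha2, ha3⟩ ⟨hb1, hb2, hb3⟩
      have ea1 : a1.val = t.val := congrArg Fin.val ha1
      have ea2 : a2.val = b.val := congrArg Fin.val ha2
      have eb1 : b1.val = t.val := congrArg Fin.val hb1
      have eb2 : b2.val = b.val := congrArg Fin.val hb2
      rw [Prod.mk.injEq]
      exact ⟨Fin.ext (by omega), Fin.ext (by omega)⟩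
  have hD2 : (∑ x : Fin T × Fin (T-1), fStar T (Sum.inr (Sum.inl (t, b))) (Sum.inr (Sum.inl x)))
      = if t.val = b.val ∧ t.val + 1 < T then 1 else 0 := by
    refine sum_ite_count
      (fun x : Fin T × Fin (T-1) => x.2 = b ∧ x.1.val = t.val + 1 ∧ t.val = b.val) _ ?_ ?_ ?_
    · intro hc
      exact ⟨(⟨t.val + 1, hc.2⟩, b), rfl, rfl, hc.1⟩
    · rintro ⟨t', v'⟩ ⟨h1, h2, h3⟩
      have e2 : t'.val = t.val + 1 := h2
      have e4 : t'.val < T := t'.isLt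
      have e3 : t.val = b.val := h3
      omega
    · rintro ⟨a1, a2⟩ ⟨b1, b2⟩ ⟨ha1, ha2, ha3⟩ ⟨hb1, hb2, hb3⟩
      have ea1 : a2.val = b.val := congrArg Fin.val ha1
      have ea2 : a1.val = t.val + 1 := ha2
      have eb1 : b2.val = b.val := congrArg Fin.val hb1
      have eb2 : b1.val = t.val + 1 := hb2
      rw [Prod.mk.injEq]
      exact ⟨Fin.ext (by omega), Fin.ext (by omega)⟩
  have e1 : fStar T (Sum.inr (Sum.inr true)) (Sum.inr (Sum.inl (t, b))) = 0 := rfl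
  have e2 : fStar T (Sum.inr (Sum.inr false)) (Sum.inr (Sum.inl (t, b))) = 0 := rfl
  have e3 : fStar T (Sum.inr (Sum.inl (t, b))) (Sum.inr (Sum.inr true)) = 0 := rfl
  have e4 : fStar T (Sum.inr (Sum.inl (t, b))) (Sum.inr (Sum.inr false)) = 0 := rfl
  rw [hC1, hC2, hD1, hD2, e1, e2, e3, e4]
  split_ifs <;> first | (exfalso; omega) | norm_num

end Cons
section OptAssemble
variable {T : ℕ} {hT : 2 < T}

lemma game15_eqV (a b : (game15 T hT).V) : a = b ↔ Fin.val a = Fin.val b := Fin.ext_iff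
lemma game15_eqT (a b : Fin (game15 T hT).T) : a = b ↔ Fin.val a = Fin.val b := Fin.ext_iff
lemma game15_eqB (a b : (game15 T hT).B) : a = b ↔ Fin.val a = Fin.val b := Fin.ext_iff
lemma game15_mem_E' (e : (game15 T hT).V × (game15 T hT).V) :
    e ∈ (game15 T hT).E ↔ Fin.val e.2 = Fin.val e.1 + 1 := game15_mem_E e

lemma fStar_nonneg (u w : (game15 T hT).Node) : 0 ≤ fStar T u w := by
  rcases u with ⟨t, v⟩ | ⟨⟨t, b⟩ | (_|_)⟩ <;> rcases w with ⟨t', v'⟩ | ⟨⟨t', b'⟩ | (_|_)⟩ <;>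
    simp only [fStar] <;> (try split_ifs) <;> norm_num

lemma fStar_le_cap (u w : (Fin T × Fin (T-1)) ⊕ ((Fin T × Fin (T-1)) ⊕ Bool)) :
    fStar T u w ≤ (game15 T hT).cap (sStar T) u w := by
  have h2T : 2 < T := hT
  delta game15
  rcases u with ⟨t, v⟩ | ⟨⟨t, b⟩ | (_|_)⟩ <;> rcases w with ⟨t', v'⟩ | ⟨⟨t', b'⟩ | (_|_)⟩ <;>
    simp only [fStar, ChargingGame.cap, Finset.mem_filter, Finset.mem_univ, true_and, game15_κE, game15_loc, game15_d, game15_κB,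
      game15_mem_E, game15_mem_E', game15_eqV, game15_eqT, game15_eqB, sStar, Fin.ext_iff, id] <;>
    (try split_ifs) <;>
    first
      | (exfalso; omega)
      | (exfalso; simp_all only [game15_mem_E, Fin.ext_iff, Prod.mk.injEq]; omega)
      | norm_num [le_max_iff]

lemma fStar_isFlow : (game15 T hT).IsFlow ((game15 T hT).cap (sStar T)) (fStar T) := by
  refine ⟨fStar_nonneg, fStar_le_cap, ?_⟩
  intro n hx hy
  rcases n with ⟨t, v⟩ | ⟨⟨t, b⟩ | (_|_)⟩
  · exact conserve_grid hT t v
  · exact conserve_batt hT t b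
  · exact absurd rfl hx
  · exact absurd rfl hy

lemma fStar_value : (game15 T hT).value (fStar T) = 1 := by
  show (∑ w, fStar T (Sum.inr (Sum.inr false)) w) = 1
  rw [Fintype.sum_sum_type, Fintype.sum_sum_type, Fintype.sum_bool]
  have h1 : (∑ x : Fin T × Fin (T-1), fStar T (Sum.inr (Sum.inr false)) (Sum.inl x))
      = if 0 < T then 1 else 0 := by
    refine sum_ite_count (fun x : Fin T × Fin (T-1) => x.1.val = 0 ∧ x.2.val = 0) _ ?_ ?_ ?_
    · intro hc
      exact ⟨(⟨0, by omega⟩, ⟨0, by omega⟩), rfl, rfl⟩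
    · intro x _
      exact lt_of_le_of_lt (Nat.zero_le _) x.1.isLt
    · rintro ⟨a1, a2⟩ ⟨b1, b2⟩ ⟨ha1, ha2⟩ ⟨hb1, hb2⟩
      have ea1 : a1.val = 0 := ha1
      have ea2 : a2.val = 0 := ha2
      have eb1 : b1.val = 0 := hb1
      have eb2 : b2.val = 0 := hb2
      rw [Prod.mk.injEq]
      exact ⟨Fin.ext (by omega), Fin.ext (by omega)⟩
  have h2 : (∑ x : Fin T × Fin (T-1), fStar T (Sum.inr (Sum.inr false)) (Sum.inr (Sum.inl x)))
      = 0 := Finset.sum_eq_zero fun x _ => rfl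
  have e1 : fStar T (Sum.inr (Sum.inr false)) (Sum.inr (Sum.inr true)) = 0 := rfl
  have e2 : fStar T (Sum.inr (Sum.inr false)) (Sum.inr (Sum.inr false)) = 0 := rfl
  rw [h1, h2, e1, e2, if_pos (by omega : 0 < T)]
  norm_num

lemma value_le_one (s : Fin (T-1) → Fin T → ℝ) (f : (game15 T hT).Node → (game15 T hT).Node → ℝ)
    (hf : (game15 T hT).IsFlow ((game15 T hT).cap s) f) :
    (game15 T hT).value f ≤ 1 := by
  have h1 : (game15 T hT).value f ≤ ∑ w, (game15 T hT).cap s (game15 T hT).source w :=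
    Finset.sum_le_sum fun w _ => hf.le_cap _ w
  refine le_trans h1 (le_of_eq ?_)
  show (∑ w : (Fin T × Fin (T-1)) ⊕ ((Fin T × Fin (T-1)) ⊕ Bool),
      (game15 T hT).cap s (Sum.inr (Sum.inr false)) w) = 1
  erw [Fintype.sum_sum_type, Fintype.sum_sum_type, Fintype.sum_bool]
  have hgrid : (∑ x : Fin T × Fin (T-1), (game15 T hT).cap s (Sum.inr (Sum.inr false)) (Sum.inl x))
      = if 0 < T then 1 else 0 := by
    have hre : ∀ x : Fin T × Fin (T-1),
        (game15 T hT).cap s (Sum.inr (Sum.inr false)) (Sum.inl x)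
          = if x.1.val = 0 ∧ x.2.val = 0 then 1 else 0 := by
      rintro ⟨t, v⟩
      show 0 ⊔ (game15 T hT).d t v = _
      rw [game15_d]
      split_ifs <;> first | norm_num | (exfalso; omega)
    rw [Finset.sum_congr rfl fun x _ => hre x]
    refine sum_ite_count (fun x : Fin T × Fin (T-1) => x.1.val = 0 ∧ x.2.val = 0) _ ?_ ?_ ?_
    · intro hc
      exact ⟨(⟨0, by omega⟩, ⟨0, by omega⟩), rfl, rfl⟩
    · intro x _
      exact lt_of_le_of_lt (Nat.zero_le _) x.1.isLt
    · rintro ⟨a1, a2⟩ ⟨b1, b2⟩ ⟨ha1, ha2⟩ ⟨hb1, hb2⟩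
      have ea1 : a1.val = 0 := ha1
      have ea2 : a2.val = 0 := ha2
      have eb1 : b1.val = 0 := hb1
      have eb2 : b2.val = 0 := hb2
      rw [Prod.mk.injEq]
      exact ⟨Fin.ext (by omega), Fin.ext (by omega)⟩
  have hbat : (∑ x : Fin T × Fin (T-1), (game15 T hT).cap s (Sum.inr (Sum.inr false)) (Sum.inr (Sum.inl x)))
      = 0 := Finset.sum_eq_zero fun x _ => rfl
  have e1 : (game15 T hT).cap s (Sum.inr (Sum.inr false)) (Sum.inr (Sum.inr true)) = 0 := rfl
  have e2 : (game15 T hT).cap s (Sum.inr (Sum.inr false)) (Sum.inr (Sum.inr false)) = 0 := rfl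
  erw [hgrid, hbat, e1, if_pos (by omega : 0 < T)]
  norm_num

end OptAssemble

section Final
variable {T : ℕ} {hT : 2 < T}

lemma sum_Iic_ite (t : Fin T) (c : ℕ) (r : ℝ) :
    (∑ z ∈ Finset.Iic t, if z.val = c then r else 0) = if c ≤ t.val then r else 0 := by
  by_cases hc : c ≤ t.val
  · have hcT : c < T := lt_of_le_of_lt hc t.isLt
    rw [if_pos hc, Finset.sum_eq_single (⟨c, hcT⟩ : Fin T)]
    · simp
    · intro z _ hne
      rw [if_neg]
      intro h
      exact hne (Fin.ext h)
    · intro h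
      exfalso
      exact h (Finset.mem_Iic.mpr (by rw [Fin.le_def]; exact hc))
  · rw [if_neg hc]
    apply Finset.sum_eq_zero
    intro z hz
    rw [if_neg]
    intro h
    exact hc (h ▸ (Fin.le_def.mp (Finset.mem_Iic.mp hz)))

lemma sStar_split (b : Fin (T-1)) (z : Fin T) :
    sStar T b z = (if z.val = b.val then (1:ℝ) else 0) + (if z.val = b.val + 1 then -1 else 0) := by
  rw [sStar]
  split_ifs <;> first | (exfalso; omega) | norm_num

lemma sStar_valid_aux (b : Fin (T-1)) (t : Fin T) :
    0 ≤ (∑ z ∈ Finset.Iic t, sStar T b z) ∧ (∑ z ∈ Finset.Iic t, sStar T b z) ≤ 1 := by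
  have hsum : (∑ z ∈ Finset.Iic t, sStar T b z)
      = (if b.val ≤ t.val then (1:ℝ) else 0) + (if b.val + 1 ≤ t.val then -1 else 0) := by
    rw [Finset.sum_congr rfl fun z _ => sStar_split b z, Finset.sum_add_distrib,
      sum_Iic_ite, sum_Iic_ite]
  rw [hsum]
  constructor <;> (split_ifs <;> first | (exfalso; omega) | norm_num)

lemma sStar_valid : (game15 T hT).ValidProfile (sStar T) := fun b t _ => sStar_valid_aux b t

lemma welfare_sStar : (game15 T hT).welfare (sStar T) = 1 := by
  have hgr : IsGreatest {r | ∃ f, (game15 T hT).IsFlow ((game15 T hT).cap (sStar T)) f ∧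
      (game15 T hT).value f = r} 1 := by
    constructor
    · exact ⟨fStar T, fStar_isFlow, fStar_value⟩
    · rintro r ⟨f, hf, rfl⟩
      exact value_le_one (sStar T) f hf
  exact hgr.csSup_eq

lemma optWelfare_eq : (game15 T hT).optWelfare = 1 := by
  have hgr : IsGreatest {r | ∃ s, (game15 T hT).ValidProfile s ∧ (game15 T hT).welfare s = r} 1 := by
    constructor
    · exact ⟨sStar T, sStar_valid, welfare_sStar⟩
    · rintro r ⟨s, hs, rfl⟩
      apply csSup_le
      · exact ⟨0, fun _ _ => 0, zero_isFlow _ _ (cap_nonneg _ _), zero_value _⟩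
      · rintro r ⟨f, hf, rfl⟩
        exact value_le_one s f hf
  exact hgr.csSup_eq

end Final


/-- For every `T > 2` and every `k ≤ T - 2`, in the instance `game15 T`,
for every price profile the all-zero strategy profile is a `k`-strong equilibrium with
welfare `0`, while the maximum welfare over all strategy profiles is `1`; hence the
`k`-strong price of anarchy is infinite for every price profile whenever `k ≤ T - 2`. -/
theorem k_strong_poa_infinite (T : ℕ) (hT : 2 < T) (k : ℕ) (hk : k ≤ T - 2) :
    (∀ p : Fin T → ℝ,
      (game15 T hT).IsStrongEq k p (fun _ _ => 0) ∧
      (game15 T hT).welfare (fun _ _ => 0) = 0) ∧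
    (game15 T hT).optWelfare = 1 := by
  refine ⟨fun p => ⟨strong_eq k hk p, welfare_zero_profile _ ⟨0, by omega⟩ fun _ => rfl⟩,
    optWelfare_eq⟩
end
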